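/- arXiv:math-ph/0612075 — 9 statements merged into one kernel-verified Lean document; each statement's English description precedes it below -/
import Mathlib

section
/- For an integer-valued random variable N with mean k + θ (k integer, 0 ≤ θ < 1), one has Var(N) = θ(1 − θ) + E[(N − k)(N − k − 1)], and the expectation E[(N − k)(N − k − 1)] is nonnegative. -/
open MeasureTheory

/-- For an integer-valued random variable `N` with mean `k + θ` (`k = ⌊E[N]⌋`,
`θ = E[N] - k`), one has `Var(N) = θ(1-θ) + E[(N-k)(N-k-1)]`, and
`E[(N-k)(N-k-1)] ≥ 0`. -/
theorem variance_eq_theta_term_add_nonneg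
    {Ω : Type*} [MeasurableSpace Ω] (μ : Measure Ω) [IsProbabilityMeasure μ]
    (N : Ω → ℤ) (hN : Measurable N)
    (hint1 : Integrable (fun ω => (N ω : ℝ)) μ)
    (hint2 : Integrable (fun ω => ((N ω : ℝ)) ^ 2) μ)
    (m : ℝ) (hm : m = ∫ ω, (N ω : ℝ) ∂μ)
    (k : ℤ) (hk : k = ⌊m⌋) (θ : ℝ) (hθ : θ = m - (k : ℝ)) :
    (∫ ω, ((N ω : ℝ) - m) ^ 2 ∂μ
      = θ * (1 - θ) + ∫ ω, ((N ω : ℝ) - k) * ((N ω : ℝ) - k - 1) ∂μ) ∧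
    0 ≤ ∫ ω, ((N ω : ℝ) - k) * ((N ω : ℝ) - k - 1) ∂μ := by
  have e1 : (fun ω => ((N ω : ℝ) - k) * ((N ω : ℝ) - k - 1))
      = fun ω => ((N ω : ℝ) ^ 2 + (-(2 * (k : ℝ) + 1)) * (N ω : ℝ)) + ((k : ℝ) * (k + 1)) := by
    funext ω; ring
  have e2 : (fun ω => ((N ω : ℝ) - m) ^ 2)
      = fun ω => ((N ω : ℝ) ^ 2 + (-(2 * m)) * (N ω : ℝ)) + m ^ 2 := by
    funext ω; ring
  have hI : ∀ c d : ℝ, ∫ ω, (((N ω : ℝ) ^ 2 + c * (N ω : ℝ)) + d) ∂μ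
      = (∫ ω, (N ω : ℝ) ^ 2 ∂μ) + c * m + d := by
    intro c d
    have hA : Integrable (fun ω => (N ω : ℝ) ^ 2 + c * (N ω : ℝ)) μ :=
      hint2.add (hint1.const_mul c)
    rw [integral_add hA (integrable_const d),
      integral_add hint2 (hint1.const_mul c), integral_const_mul, integral_const,
      probReal_univ, smul_eq_mul, one_mul, hm]
  constructor
  · rw [e1, e2, hI, hI, hθ]
    ring
  · apply integral_nonneg
    intro ω
    have h : (0 : ℤ) ≤ (N ω - k) * (N ω - k - 1) := by
      rcases le_or_gt (N ω) k with h | h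
      · have h1 : N ω - k ≤ 0 := by omega
        have h2 : N ω - k - 1 ≤ 0 := by omega
        nlinarith
      · exact mul_nonneg (by omega) (by omega)
    simp only [Pi.zero_apply]
    exact_mod_cast h
end

section
/- Suppose a translation invariant point process on ℤ realizes density ρ and pair correlation g with g(0) = 0, g(±1) = α for some α with 0 ≤ α ≤ 1, and g(x) = 1 for |x| > 1. Then ρ ≤ 1/(3 − 2α). -/
open MeasureTheory Finset

/-- If a translation invariant point process on `ℤ` realizes density `ρ` and
pair correlation `g` with `g(±1) = α`, `0 ≤ α ≤ 1`, and `g(x) = 1` for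
`|x| > 1`, then `ρ ≤ 1/(3 - 2α)`. -/
theorem density_bound_alpha_le_one
    (μ : Measure (ℤ → Bool)) [IsProbabilityMeasure μ]
    (hshift : μ.map (fun η (n : ℤ) => η (n + 1)) = μ)
    (ρ α : ℝ) (hα0 : 0 ≤ α) (hα1 : α ≤ 1)
    (hρ : (μ {η | η 0 = true}).toReal = ρ)
    (hpair : ∀ x : ℤ, x ≠ 0 →
      (μ {η | η 0 = true ∧ η x = true}).toReal
        = ρ ^ 2 * (if x = 1 ∨ x = -1 then α else 1)) :
    ρ ≤ 1 / (3 - 2 * α) := by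
  classical
  have hρ0 : 0 ≤ ρ := hρ ▸ ENNReal.toReal_nonneg
  have h3 : (0:ℝ) < 3 - 2 * α := by linarith
  -- the shift map
  set T : (ℤ → Bool) → (ℤ → Bool) := fun η n => η (n + 1) with hTdef
  have hT : Measurable T := measurable_pi_lambda _ (fun n => measurable_pi_apply (n+1))
  set A : ℤ → Set (ℤ → Bool) := fun i => {η | η i = true} with hAdef
  have hA : ∀ i, MeasurableSet (A i) := by
    intro i
    have h : A i = (fun η : ℤ → Bool => η i) ⁻¹' {true} := rfl
    rw [h]
    exact (measurable_pi_apply i) (measurableSet_singleton true)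
  have hμT : ∀ s : Set (ℤ → Bool), MeasurableSet s → μ (T ⁻¹' s) = μ s := by
    intro s hs
    rw [← Measure.map_apply hT hs, hshift]
  have hpre1 : ∀ a : ℤ, T ⁻¹' A a = A (a+1) := fun a => rfl
  have hpre2 : ∀ a b : ℤ, T ⁻¹' (A a ∩ A b) = A (a+1) ∩ A (b+1) := fun a b => rfl
  -- shift invariance of singles and pairs
  have single : ∀ n : ℕ, μ (A n) = μ (A 0) := by
    intro n
    induction n with
    | zero => rfl
    | succ n ih =>
      have hc : ((n+1:ℕ):ℤ) = (n:ℤ) + 1 := by push_cast; ring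
      rw [hc, ← hpre1, hμT _ (hA _)]
      exact ih
  have pairshift : ∀ (n : ℕ) (d : ℤ), μ (A n ∩ A (n + d)) = μ (A 0 ∩ A d) := by
    intro n d
    induction n with
    | zero => norm_num
    | succ n ih =>
      have h1 : ((n+1 : ℕ) : ℤ) = (n : ℤ) + 1 := by push_cast; ring
      have h2 : ((n:ℤ) + 1) + d = ((n : ℤ) + d) + 1 := by ring
      rw [h1, h2, ← hpre2, hμT _ ((hA _).inter (hA _))]
      exact ih
  -- values of the measures
  have hsingle : ∀ n : ℕ, (μ (A n)).toReal = ρ := by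
    intro n; rw [single n]; exact hρ
  have hAint : ∀ x : ℤ, A 0 ∩ A x = {η | η 0 = true ∧ η x = true} := by
    intro x; ext η; simp [hAdef, Set.mem_inter_iff]
  have hpairN : ∀ i j : ℕ, i < j →
      (μ (A i ∩ A j)).toReal = ρ ^ 2 * (if j = i + 1 then α else 1) := by
    intro i j hij
    have hd : (j : ℤ) = (i : ℤ) + ((j:ℤ) - i) := by ring
    have := pairshift i ((j:ℤ) - i)
    rw [← hd] at this
    rw [this, hAint]
    rw [hpair _ (by omega : (j:ℤ) - i ≠ 0)]
    congr 1
    have : ((j:ℤ) - i = 1 ∨ (j:ℤ) - i = -1) ↔ j = i + 1 := by omega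
    simp only [this]
  -- indicator random variables
  set f : ℕ → (ℤ → Bool) → ℝ := fun i => Set.indicator (A i) (fun _ => (1:ℝ)) with hfdef
  have hfint : ∀ i, Integrable (f i) μ := fun i => (integrable_const (1:ℝ)).indicator (hA i)
  have hfI : ∀ i : ℕ, ∫ η, f i η ∂μ = ρ := by
    intro i
    rw [hfdef]
    rw [integral_indicator_const (1:ℝ) (hA i)]
    simp [measureReal_def, hsingle i]
  have hff : ∀ i j : ℕ, (fun η => f i η * f j η)
      = Set.indicator (A i ∩ A j) (fun _ => (1:ℝ)) := by
    intro i j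
    funext η
    simp only [hfdef, Set.indicator_apply, Set.mem_inter_iff]
    by_cases h1 : η ∈ A i <;> by_cases h2 : η ∈ A j <;> simp [h1, h2]
  have hffint : ∀ i j : ℕ, Integrable (fun η => f i η * f j η) μ := by
    intro i j; rw [hff]; exact (integrable_const (1:ℝ)).indicator ((hA _).inter (hA _))
  -- value of pair integrals
  have hffI : ∀ i j : ℕ, ∫ η, f i η * f j η ∂μ
      = (ρ^2 + (if i = j then ρ - ρ^2 else 0)
          + (if i + 1 = j ∨ j + 1 = i then ρ^2 * α - ρ^2 else 0)) := by
    intro i j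
    rw [hff, integral_indicator_const (1:ℝ) ((hA _).inter (hA _)), smul_eq_mul, mul_one]
    rcases eq_or_ne i j with h | h
    · subst h
      rw [Set.inter_self, measureReal_def, hsingle]
      have : ¬ (i + 1 = i ∨ i + 1 = i) := by omega
      simp [this]
    · have hadj : ¬ i = j := h
      rcases lt_or_gt_of_ne h with hlt | hgt
      · rw [measureReal_def, hpairN i j hlt]
        have h2 : (i + 1 = j ∨ j + 1 = i) ↔ j = i + 1 := by omega
        simp only [hadj, if_false, h2]
        by_cases hc : j = i + 1 <;> simp [hc] <;> ring
      · rw [Set.inter_comm, measureReal_def, hpairN j i hgt]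
        have h2 : (i + 1 = j ∨ j + 1 = i) ↔ i = j + 1 := by omega
        simp only [hadj, if_false, h2]
        by_cases hc : i = j + 1 <;> simp [hc] <;> ring
  -- the per-window second moment computation
  set c1 : ℝ := ρ - ρ^2 with hc1
  set c2 : ℝ := ρ^2*α - ρ^2 with hc2
  have key : ∀ K : ℕ, (((K:ℝ)+1) * ρ)^2
      ≤ ((K:ℝ)+1)^2*ρ^2 + ((K:ℝ)+1)*c1 + 2*(K:ℝ)*c2 := by
    intro K
    set S : (ℤ → Bool) → ℝ := fun η => ∑ i ∈ Finset.range (K+1), f i η with hSdef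
    have hSint : Integrable S μ := integrable_finset_sum _ (fun i _ => hfint i)
    have hSI : ∫ η, S η ∂μ = ((K:ℝ)+1) * ρ := by
      rw [hSdef]
      rw [integral_finset_sum _ (fun i _ => hfint i)]
      simp only [hfI, Finset.sum_const, Finset.card_range, nsmul_eq_mul]
      push_cast; ring
    set F : (ℤ → Bool) → ℝ :=
      fun η => ∑ i ∈ Finset.range (K+1), ∑ j ∈ Finset.range (K+1), f i η * f j η with hFdef
    have hFint : Integrable F μ :=
      integrable_finset_sum _ (fun i _ => integrable_finset_sum _ (fun j _ => hffint i j))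
    have hSF : ∀ η, S η * S η = F η := by
      intro η
      rw [hSdef, hFdef]
      exact Finset.sum_mul_sum _ _ _ _
    -- compute ∫ F
    have hsplit_or : ∀ i j : ℕ, (if i+1=j ∨ j+1=i then c2 else 0)
        = (if i+1=j then c2 else 0) + (if j+1=i then c2 else 0) := by
      intro i j
      by_cases h1 : i+1=j <;> by_cases h2 : j+1=i
      · exfalso; omega
      · simp [h1, h2]
      · simp [h1, h2]
      · simp [h1, h2]
    have hsum2 : ∑ i ∈ Finset.range (K+1), ∑ j ∈ Finset.range (K+1),
        (if i = j then c1 else 0) = ((K:ℝ)+1) * c1 := by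
      have hin : ∀ i ∈ Finset.range (K+1), ∑ j ∈ Finset.range (K+1),
          (if i = j then c1 else 0) = c1 := by
        intro i hi
        rw [Finset.sum_ite_eq]
        simp [hi]
      rw [Finset.sum_congr rfl hin, Finset.sum_const, Finset.card_range, nsmul_eq_mul]
      push_cast; ring
    have hsum3a : ∑ i ∈ Finset.range (K+1), ∑ j ∈ Finset.range (K+1),
        (if i+1 = j then c2 else 0) = (K:ℝ) * c2 := by
      have hin : ∀ i, ∑ j ∈ Finset.range (K+1), (if i+1 = j then c2 else 0)
          = if i+1 ∈ Finset.range (K+1) then c2 else 0 := by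
        intro i
        rw [Finset.sum_ite_eq]
      simp only [hin]
      rw [Finset.sum_range_succ]
      have h1 : ∀ i ∈ Finset.range K, (if i+1 ∈ Finset.range (K+1) then c2 else 0) = c2 := by
        intro i hi
        simp only [Finset.mem_range] at hi ⊢
        simp [Nat.add_lt_add_right hi 1]
      rw [Finset.sum_congr rfl h1, Finset.sum_const, Finset.card_range, nsmul_eq_mul]
      simp
    have hsum3b : ∑ i ∈ Finset.range (K+1), ∑ j ∈ Finset.range (K+1),
        (if j+1 = i then c2 else 0) = (K:ℝ) * c2 := by
      rw [Finset.sum_comm]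
      exact hsum3a
    have hFI : ∫ η, F η ∂μ = ((K:ℝ)+1)^2*ρ^2 + ((K:ℝ)+1)*c1 + 2*(K:ℝ)*c2 := by
      rw [hFdef]
      rw [integral_finset_sum _ (fun i _ => integrable_finset_sum _ (fun j _ => hffint i j))]
      have : ∀ i ∈ Finset.range (K+1), (∫ η, (∑ j ∈ Finset.range (K+1), f i η * f j η) ∂μ)
          = ∑ j ∈ Finset.range (K+1),
            (ρ^2 + (if i = j then c1 else 0) + (if i+1=j ∨ j+1=i then c2 else 0)) := by
        intro i _
        rw [integral_finset_sum _ (fun j _ => hffint i j)]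
        exact Finset.sum_congr rfl (fun j _ => hffI i j)
      rw [Finset.sum_congr rfl this]
      simp only [hsplit_or, Finset.sum_add_distrib]
      rw [hsum2, hsum3a, hsum3b]
      simp only [Finset.sum_const, Finset.card_range, nsmul_eq_mul]
      push_cast; ring
    -- variance nonnegativity
    set m : ℝ := ((K:ℝ)+1) * ρ with hm
    have hvar : 0 ≤ ∫ η, (S η - m)^2 ∂μ := integral_nonneg fun η => sq_nonneg _
    have hexp : (fun η => (S η - m)^2) = fun η => (F η - (2*m) * S η) + m^2 := by
      funext η
      rw [sub_sq, pow_two, hSF η]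
      ring
    have hint2 : Integrable (fun η => 2*m*S η) μ := by exact hSint.const_mul (2*m)
    have hint1 : Integrable (fun η => F η - 2*m*S η) μ := by exact hFint.sub hint2
    rw [hexp, integral_add hint1 (integrable_const _),
      integral_sub hFint hint2, integral_const_mul, integral_const, hSI, hFI] at hvar
    simp only [measureReal_def, measure_univ, ENNReal.toReal_one, smul_eq_mul, one_mul] at hvar
    simp only [hm] at hvar ⊢
    nlinarith [hvar]
  -- conclude
  rw [le_div_iff₀ h3]
  by_contra hcon
  push_neg at hcon
  have hρpos : 0 < ρ := by nlinarith
  have hε : 0 < ρ * (3 - 2*α) - 1 := by linarith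
  obtain ⟨K, hK⟩ := exists_nat_gt (2*ρ*(1-α) / (ρ * (3 - 2*α) - 1))
  have hK' : 2*ρ*(1-α) < (K:ℝ) * (ρ * (3 - 2*α) - 1) := (div_lt_iff₀ hε).mp hK
  have hkey := key K
  rw [hc1, hc2] at hkey
  nlinarith [hkey, hK', hρpos, sq_nonneg ρ, mul_pos hρpos hε]
end

section
/- Suppose a translation invariant point process on ℤ realizes density ρ and pair correlation g with g(0) = 0, g(±1) = α for some α ≥ 1, and g(x) = 1 for |x| > 1. Then ρ ≤ 1/(2α − 1). -/
/-!
Writing `Aᵢ = {η | η i = true}`, inclusion–exclusion inside `A₀` gives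
`P(A₀ ∩ A₋₁) + P(A₀ ∩ A₁) ≤ P(A₀) + P(A₋₁ ∩ A₁)`. By the given correlations and shift
invariance (`P(A₋₁ ∩ A₁) = P(A₀ ∩ A₂) = ρ²`) this reads `2αρ² ≤ ρ + ρ²`, i.e. `ρ (2α - 1) ≤ 1`.
-/

open MeasureTheory Set

theorem measureReal_inter_add_measureReal_inter_le {Ω : Type*} [MeasurableSpace Ω]
    (μ : Measure Ω) [IsFiniteMeasure μ] {A B C : Set Ω} (hA : MeasurableSet A)
    (hC : MeasurableSet C) :
    μ.real (A ∩ B) + μ.real (A ∩ C) ≤ μ.real A + μ.real (B ∩ C) := by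
  rw [← measureReal_union_add_inter (hA.inter hC)]
  exact add_le_add (measureReal_mono (union_subset inter_subset_left inter_subset_left))
    (measureReal_mono (inter_subset_inter inter_subset_right inter_subset_right))

theorem measurableSet_setOf_apply_eq_true (i : ℤ) :
    MeasurableSet {η : ℤ → Bool | η i = true} :=
  measurableSet_eq_fun (measurable_pi_apply i) measurable_const

theorem measure_occupied_pair_eq_shift {μ : Measure (ℤ → Bool)}
    (hshift : μ.map (fun η (n : ℤ) => η (n + 1)) = μ) (i j : ℤ) :
    μ {η | η i = true ∧ η j = true} = μ {η | η (i + 1) = true ∧ η (j + 1) = true} := by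
  conv_lhs => rw [← hshift]
  rw [Measure.map_apply (measurable_pi_lambda _ fun n => measurable_pi_apply (n + 1))
    ((measurableSet_setOf_apply_eq_true i).inter (measurableSet_setOf_apply_eq_true j))]
  rfl

theorem le_one_div_two_mul_sub_one_of_two_mul_sq_mul_le {ρ α : ℝ} (hρ : 0 ≤ ρ) (hα : 1 < 2 * α)
    (h : 2 * (ρ ^ 2 * α) ≤ ρ + ρ ^ 2) : ρ ≤ 1 / (2 * α - 1) := by
  have hα' : 0 < 2 * α - 1 := by linarith
  rcases hρ.eq_or_lt with rfl | hpos
  · positivity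
  · rw [le_div_iff₀ hα']
    nlinarith

/-- If a translation invariant point process on `ℤ` realizes density `ρ` and
pair correlation `g` with `g(±1) = α`, `α ≥ 1`, and `g(x) = 1` for `|x| > 1`,
then `ρ ≤ 1/(2α - 1)`. -/
theorem density_bound_alpha_ge_one
    (μ : Measure (ℤ → Bool)) [IsProbabilityMeasure μ]
    (hshift : μ.map (fun η (n : ℤ) => η (n + 1)) = μ)
    (ρ α : ℝ) (hα : 1 ≤ α)
    (hρ : (μ {η | η 0 = true}).toReal = ρ)
    (hpair : ∀ x : ℤ, x ≠ 0 →
      (μ {η | η 0 = true ∧ η x = true}).toReal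
        = ρ ^ 2 * (if x = 1 ∨ x = -1 then α else 1)) :
    ρ ≤ 1 / (2 * α - 1) := by
  have hρ0 : 0 ≤ ρ := hρ ▸ ENNReal.toReal_nonneg
  have hoccupied := measurableSet_setOf_apply_eq_true
  have hincl : (μ {η | η 0 = true ∧ η (-1) = true}).toReal + (μ {η | η 0 = true ∧ η 1 = true}).toReal
      ≤ (μ {η | η 0 = true}).toReal + (μ {η | η (-1) = true ∧ η 1 = true}).toReal :=
    measureReal_inter_add_measureReal_inter_le μ (hoccupied 0) (hoccupied 1)
  have hfar : μ {η | η (-1) = true ∧ η 1 = true} = μ {η | η 0 = true ∧ η 2 = true} := by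
    simpa using measure_occupied_pair_eq_shift hshift (-1) 1
  rw [hpair (-1) (by norm_num), hpair 1 (by norm_num), hρ, hfar, hpair 2 (by norm_num)] at hincl
  norm_num at hincl
  exact le_one_div_two_mul_sub_one_of_two_mul_sq_mul_le hρ0 (by linarith) (by linarith)
end

section
/- For each α with 1/2 ≤ α ≤ 1, there exists a translation invariant point process on ℤ with density ρ = 1/(1 + √(2 − 2α)), with E[η(x)η(x+1)] = αρ², and E[η(x)η(y)] = ρ² for |x − y| ≥ 2. In particular for α = 1/2 the maximal density 1/2 is attained. -/
open MeasureTheory Set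

noncomputable section
namespace RealizationSuperposition

abbrev Gsp := (Option ℤ) → AddCircle (1:ℝ)

instance : IsProbabilityMeasure (volume : Measure (AddCircle (1:ℝ))) := by
  constructor; simp [AddCircle.measure_univ]

def μ0 : Measure Gsp := Measure.addHaarMeasure ⊤

instance : Measure.IsAddHaarMeasure μ0 := by unfold μ0; infer_instance

instance : IsProbabilityMeasure μ0 := by
  constructor
  have := Measure.addHaarMeasure_self (K₀ := (⊤ : TopologicalSpace.PositiveCompacts Gsp))
  simpa [μ0] using this

def τ : AddCircle (1:ℝ) → ℝ := fun x => (AddCircle.equivIco 1 0 x : ℝ)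

lemma τ_mem (x : AddCircle (1:ℝ)) : τ x ∈ Ico (0:ℝ) 1 := by
  have := (AddCircle.equivIco 1 0 x).2; simpa [τ] using this

lemma measurable_τ : Measurable τ :=
  measurable_subtype_coe.comp (AddCircle.measurableEquivIco 1 0).measurable

lemma τ_coe {r : ℝ} (h : r ∈ Ico (0:ℝ) 1) : τ (r : AddCircle (1:ℝ)) = r := by
  rw [τ, AddCircle.coe_equivIco_mk_apply]
  simp [Int.fract_eq_self.mpr ⟨h.1, h.2⟩]

lemma coe_τ (x : AddCircle (1:ℝ)) : ((τ x : ℝ) : AddCircle (1:ℝ)) = x := by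
  obtain ⟨b, hb, rfl⟩ := AddCircle.eq_coe_Ico x
  rw [τ_coe (by simpa using hb)]

/-- measure of an arc of the circle -/
lemma arc_volume {a b : ℝ} (h0 : 0 ≤ a) (hab : a ≤ b) (hb1 : b ≤ 1) :
    volume (τ ⁻¹' Ico a b) = ENNReal.ofReal (b - a) := by
  have hmeas : MeasurableSet (τ ⁻¹' Ico a b) := measurable_τ measurableSet_Ico
  rw [AddCircle.add_projection_respects_measure (T := 1) 0 hmeas]
  have hae : ((QuotientAddGroup.mk ⁻¹' (τ ⁻¹' Ico a b)) ∩ Ioc 0 (0 + 1) : Set ℝ)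
      =ᵐ[volume] (Ico a b : Set ℝ) := by
    rw [ae_eq_set]
    constructor
    · refine measure_mono_null (fun r hr => ?_) (Real.volume_singleton (a := 1))
      simp only [mem_diff, mem_inter_iff, mem_preimage, mem_Ioc, mem_Ico] at hr
      obtain ⟨⟨hτ, h01, h1⟩, hno⟩ := hr
      by_contra hne
      have hr1 : r < 1 := lt_of_le_of_ne (by linarith) (by simpa using hne)
      rw [τ_coe ⟨by linarith, hr1⟩] at hτ
      exact hno hτ
    · refine measure_mono_null (fun r hr => ?_) (Real.volume_singleton (a := 0))
      simp only [mem_diff, mem_inter_iff, mem_preimage, mem_Ioc, mem_Ico] at hr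
      obtain ⟨⟨ha, hb⟩, hno⟩ := hr
      by_contra hne
      have hr0 : 0 < r := lt_of_le_of_ne (by linarith) (by simpa using fun h => hne h.symm)
      have hr1 : r < 1 := by linarith
      have hτr : τ (r : AddCircle (1:ℝ)) = r := τ_coe ⟨by linarith, hr1⟩
      exact hno ⟨⟨by rw [hτr]; exact ha, by rw [hτr]; exact hb⟩, hr0, by linarith⟩
  rw [measure_congr hae, Real.volume_Ico]

/-- pushfoward of `μ0` under a continuous surjective additive map is the
corresponding Haar probability measure. -/
lemma map_eq_of_hom {H : Type*} [TopologicalSpace H] [MeasurableSpace H] [BorelSpace H]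
    [AddCommGroup H] [IsTopologicalAddGroup H] [CompactSpace H] [T2Space H]
    (ν : Measure H) [IsProbabilityMeasure ν] [ν.IsAddHaarMeasure] (φ : Gsp → H)
    (hc : Continuous φ) (hadd : ∀ x y, φ (x + y) = φ x + φ y)
    (hs : Function.Surjective φ) : μ0.map φ = ν := by
  have hm : Measurable φ := hc.measurable
  haveI : IsProbabilityMeasure (μ0.map φ) := Measure.isProbabilityMeasure_map hm.aemeasurable
  haveI hinv : (μ0.map φ).IsAddLeftInvariant := by
    constructor
    intro v
    obtain ⟨w, hw⟩ := hs v
    rw [Measure.map_map (measurable_const_add v) hm]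
    have h1 : (fun h => v + h) ∘ φ = φ ∘ (fun ω => w + ω) := by
      funext ω
      simp only [Function.comp_apply, hadd, hw]
    rw [h1, ← Measure.map_map hm (measurable_const_add w),
      MeasureTheory.map_add_left_eq_self μ0 w]
  haveI hopen : (μ0.map φ).IsOpenPosMeasure := by
    constructor
    intro U hU hne
    rw [Measure.map_apply hm hU.measurableSet]
    exact (hU.preimage hc).measure_ne_zero μ0 (hne.preimage hs)
  haveI : (μ0.map φ).IsAddHaarMeasure :=
    { toIsFiniteMeasureOnCompacts := inferInstance
      toIsAddLeftInvariant := hinv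
      toIsOpenPosMeasure := hopen }
  exact Measure.isAddHaarMeasure_eq_of_isProbabilityMeasure _ _

lemma cylinder_measure (t : Finset (Option ℤ)) (A : Option ℤ → Set (AddCircle (1:ℝ)))
    (hA : ∀ i, MeasurableSet (A i)) :
    μ0 {ω : Gsp | ∀ i ∈ t, ω i ∈ A i} = ∏ i ∈ t, volume (A i) := by
  classical
  set Φ : Gsp → ({i // i ∈ t} → AddCircle (1:ℝ)) := fun ω i => ω i with hΦ
  have Φmeas : Measurable Φ := measurable_pi_lambda _ fun i => measurable_pi_apply _
  have Φcont : Continuous Φ := continuous_pi fun i => continuous_apply _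
  have Φsurj : Function.Surjective Φ := by
    intro f
    refine ⟨fun i => if h : i ∈ t then f ⟨i, h⟩ else 0, ?_⟩
    funext i
    simp [hΦ, i.2]
  have hmap : μ0.map Φ = Measure.pi (fun _ : {i // i ∈ t} => (volume : Measure (AddCircle (1:ℝ)))) :=
    map_eq_of_hom _ Φ Φcont (fun x y => rfl) Φsurj
  have hset : {ω : Gsp | ∀ i ∈ t, ω i ∈ A i}
      = Φ ⁻¹' (univ.pi fun i : {i // i ∈ t} => A i) := by
    ext ω
    simp only [mem_setOf_eq, mem_preimage, mem_pi, mem_univ, forall_true_left, hΦ]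
    exact ⟨fun h i => h i i.2, fun h i hi => h ⟨i, hi⟩⟩
  rw [hset, ← Measure.map_apply Φmeas (MeasurableSet.univ_pi fun i => hA i), hmap,
    Measure.pi_pi]
  exact Finset.prod_coe_sort t fun i => volume (A i)
open scoped Classical

/-- occupied at the left position of a block -/
def Lset (p : ℝ) : Set (AddCircle (1:ℝ)) := τ ⁻¹' (Ico 0 p ∪ Ico (2*p) 1)
/-- occupied at the right position of a block -/
def Rset (p : ℝ) : Set (AddCircle (1:ℝ)) := τ ⁻¹' (Ico p 1)
/-- partition offset 0 -/
def C0 : Set (AddCircle (1:ℝ)) := τ ⁻¹' (Ico 0 (1/2))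
/-- partition offset 1 -/
def C1 : Set (AddCircle (1:ℝ)) := τ ⁻¹' (Ico (1/2) 1)

lemma measurable_Lset (p : ℝ) : MeasurableSet (Lset p) :=
  measurable_τ (measurableSet_Ico.union measurableSet_Ico)
lemma measurable_Rset (p : ℝ) : MeasurableSet (Rset p) := measurable_τ measurableSet_Ico
lemma measurable_C0 : MeasurableSet C0 := measurable_τ measurableSet_Ico
lemma measurable_C1 : MeasurableSet C1 := measurable_τ measurableSet_Ico

lemma mem_C0_iff (x : AddCircle (1:ℝ)) : x ∈ C0 ↔ τ x < 1/2 := by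
  have := τ_mem x
  simp only [C0, mem_preimage, mem_Ico]
  exact ⟨fun h => h.2, fun h => ⟨this.1, h⟩⟩

lemma mem_C1_iff (x : AddCircle (1:ℝ)) : x ∈ C1 ↔ ¬ τ x < 1/2 := by
  have := τ_mem x
  simp only [C1, mem_preimage, mem_Ico]
  constructor
  · intro h; linarith [h.1]
  · intro h; exact ⟨by linarith, this.2⟩

lemma volume_C0 : volume C0 = ENNReal.ofReal (1/2) := by
  have := arc_volume (a := 0) (b := 1/2) le_rfl (by norm_num) (by norm_num)
  simpa [C0] using this

lemma volume_C1 : volume C1 = ENNReal.ofReal (1/2) := by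
  have := arc_volume (a := 1/2) (b := 1) (by norm_num) (by norm_num) le_rfl
  rw [C1, this]
  norm_num

variable {p : ℝ}

lemma volume_Lset (hp0 : 0 ≤ p) (hp2 : 2*p ≤ 1) :
    volume (Lset p) = ENNReal.ofReal (1 - p) := by
  have hp1 : p ≤ 1 := by linarith
  have hd : Disjoint (τ ⁻¹' Ico (0:ℝ) p) (τ ⁻¹' Ico (2*p) 1) := by
    refine Disjoint.preimage _ ?_
    rw [Set.disjoint_left]
    intro x hx hx'
    simp only [mem_Ico] at hx hx'
    linarith [hx.2, hx'.1]
  rw [Lset, preimage_union, measure_union hd (measurable_τ measurableSet_Ico),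
    arc_volume le_rfl hp0 hp1, arc_volume (by linarith) hp2 le_rfl,
    ← ENNReal.ofReal_add (by linarith) (by linarith)]
  ring_nf

lemma volume_Rset (hp0 : 0 ≤ p) (hp2 : 2*p ≤ 1) :
    volume (Rset p) = ENNReal.ofReal (1 - p) := by
  rw [Rset, arc_volume hp0 (by linarith) le_rfl]

lemma volume_LRset (hp0 : 0 ≤ p) (hp2 : 2*p ≤ 1) :
    volume (Lset p ∩ Rset p) = ENNReal.ofReal (1 - 2*p) := by
  have h : Lset p ∩ Rset p = τ ⁻¹' Ico (2*p) 1 := by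
    ext x
    simp only [Lset, Rset, mem_inter_iff, mem_preimage, mem_union, mem_Ico]
    constructor
    · rintro ⟨h1 | h1, h2⟩
      · exact absurd h2.1 (by linarith [h1.2])
      · exact h1
    · intro h
      exact ⟨Or.inr h, by constructor <;> linarith [h.1, h.2]⟩
  rw [h, arc_volume (by linarith) hp2 le_rfl]

/-- two-coordinate cylinder probability -/
lemma cyl2 {i j : Option ℤ} (hij : i ≠ j) {A B : Set (AddCircle (1:ℝ))}
    (hA : MeasurableSet A) (hB : MeasurableSet B) :
    μ0 {ω : Gsp | ω i ∈ A ∧ ω j ∈ B} = volume A * volume B := by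
  have h := cylinder_measure {i, j} (fun l => if l = i then A else B)
    (fun l => by by_cases h : l = i <;> simp [h, hA, hB])
  have hset : {ω : Gsp | ∀ l ∈ ({i, j} : Finset (Option ℤ)),
      ω l ∈ (if l = i then A else B)} = {ω : Gsp | ω i ∈ A ∧ ω j ∈ B} := by
    ext ω
    simp only [Finset.mem_insert, Finset.mem_singleton, mem_setOf_eq]
    constructor
    · intro h
      refine ⟨by simpa using h i (Or.inl rfl), ?_⟩
      have := h j (Or.inr rfl)
      rwa [if_neg (fun hji => hij hji.symm)] at this
    · rintro ⟨h1, h2⟩ l (rfl | rfl)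
      · simpa using h1
      · rwa [if_neg (fun hji => hij hji.symm)]
  rw [hset] at h
  rw [h, Finset.prod_insert (by simpa using hij), Finset.prod_singleton]
  show volume (if i = i then A else B) * volume (if j = i then A else B) = _
  rw [if_pos rfl, if_neg (Ne.symm hij)]

/-- three-coordinate cylinder probability -/
lemma cyl3 {i j k : Option ℤ} (hij : i ≠ j) (hik : i ≠ k) (hjk : j ≠ k)
    {A B C : Set (AddCircle (1:ℝ))}
    (hA : MeasurableSet A) (hB : MeasurableSet B) (hC : MeasurableSet C) :
    μ0 {ω : Gsp | ω i ∈ A ∧ ω j ∈ B ∧ ω k ∈ C} = volume A * volume B * volume C := by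
  have h := cylinder_measure {i, j, k} (fun l => if l = i then A else if l = j then B else C)
    (fun l => by
      split
      · exact hA
      · split
        · exact hB
        · exact hC)
  have hset : {ω : Gsp | ∀ l ∈ ({i, j, k} : Finset (Option ℤ)),
      ω l ∈ (if l = i then A else if l = j then B else C)}
      = {ω : Gsp | ω i ∈ A ∧ ω j ∈ B ∧ ω k ∈ C} := by
    ext ω
    simp only [Finset.mem_insert, Finset.mem_singleton, mem_setOf_eq]
    constructor
    · intro h
      refine ⟨by simpa using h i (Or.inl rfl), ?_, ?_⟩
      · have := h j (Or.inr (Or.inl rfl))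
        rwa [if_neg (fun hji => hij hji.symm), if_pos rfl] at this
      · have := h k (Or.inr (Or.inr rfl))
        rwa [if_neg (fun h' => hik h'.symm), if_neg (fun h' => hjk h'.symm)] at this
    · rintro ⟨h1, h2, h3⟩ l (rfl | rfl | rfl)
      · simpa using h1
      · rwa [if_neg (fun hji => hij hji.symm), if_pos rfl]
      · rwa [if_neg (fun h' => hik h'.symm), if_neg (fun h' => hjk h'.symm)]
  rw [hset] at h
  rw [h, Finset.prod_insert (by simp [hij, hik]), Finset.prod_insert (by simpa using hjk),
    Finset.prod_singleton]
  show volume (if i = i then A else if i = j then B else C) *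
      (volume (if j = i then A else if j = j then B else C) *
        volume (if k = i then A else if k = j then B else C)) = _
  rw [if_pos rfl, if_neg (Ne.symm hij), if_pos rfl, if_neg (Ne.symm hik), if_neg (Ne.symm hjk)]
  ring
open scoped Classical

/-- the partition offset determined by the coordinate `none` -/
def off (ω : Gsp) : ℤ := if ω none ∈ C0 then 0 else 1

/-- block index of site `n` for partition offset `c` -/
def jb (n c : ℤ) : ℤ := (n - c) / 2

/-- occupation set for site `n` in partition offset `c` -/
def Sset (p : ℝ) (n c : ℤ) : Set (AddCircle (1:ℝ)) :=
  if (n - c) % 2 = 0 then Lset p else Rset p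

lemma measurable_Sset (p : ℝ) (n c : ℤ) : MeasurableSet (Sset p n c) := by
  rw [Sset]; split
  · exact measurable_Lset p
  · exact measurable_Rset p

lemma volume_Sset {p : ℝ} (hp0 : 0 ≤ p) (hp2 : 2*p ≤ 1) (n c : ℤ) :
    volume (Sset p n c) = ENNReal.ofReal (1 - p) := by
  rw [Sset]; split
  · exact volume_Lset hp0 hp2
  · exact volume_Rset hp0 hp2

/-- the configuration map -/
def Fp (p : ℝ) (ω : Gsp) (n : ℤ) : Bool :=
  if ω (some (jb n (off ω))) ∈ Sset p n (off ω) then true else false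

lemma Fp_true_iff {p : ℝ} (ω : Gsp) (n : ℤ) :
    Fp p ω n = true ↔ ω (some (jb n (off ω))) ∈ Sset p n (off ω) := by
  rw [Fp]; split <;> simp_all

lemma measurable_Fp (p : ℝ) : Measurable (Fp p) := by
  apply measurable_pi_lambda
  intro n
  have h : (fun ω : Gsp => Fp p ω n) = fun ω =>
      if ω none ∈ C0 then (if ω (some (jb n 0)) ∈ Sset p n 0 then true else false)
      else (if ω (some (jb n 1)) ∈ Sset p n 1 then true else false) := by
    funext ω
    by_cases h : ω none ∈ C0 <;> simp [Fp, off, h]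
  rw [h]
  refine Measurable.ite ((measurable_pi_apply none) measurable_C0) ?_ ?_ <;>
    exact Measurable.ite ((measurable_pi_apply _) (measurable_Sset p n _))
      measurable_const measurable_const

/-- the element of the circle of order two -/
def half : AddCircle (1:ℝ) := ((1/2 : ℝ) : AddCircle (1:ℝ))

lemma add_half_mem_C0_iff (x : AddCircle (1:ℝ)) : x + half ∈ C0 ↔ x ∉ C0 := by
  have hx := τ_mem x
  have hsum : x + half = ((τ x + 1/2 : ℝ) : AddCircle (1:ℝ)) := by
    rw [← coe_τ x, half, ← AddCircle.coe_add (p := (1:ℝ))]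
    rw [coe_τ]
  by_cases h : τ x < 1/2
  · have hτ : τ (x + half) = τ x + 1/2 := by
      rw [hsum, τ_coe ⟨by linarith [hx.1], by linarith⟩]
    rw [mem_C0_iff, mem_C0_iff, hτ]
    constructor
    · intro h' _; linarith [hx.1]
    · intro h'; exact absurd h h'
  · have hcoe : x + half = ((τ x - 1/2 : ℝ) : AddCircle (1:ℝ)) := by
      rw [hsum]
      have h2 : (τ x + 1/2 : ℝ) = (τ x - 1/2) + 1 := by ring
      rw [h2, AddCircle.coe_add (p := (1:ℝ)), AddCircle.coe_period (p := (1:ℝ)), add_zero]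
    have hτ : τ (x + half) = τ x - 1/2 := by
      rw [hcoe, τ_coe ⟨by linarith, by linarith [hx.2]⟩]
    rw [mem_C0_iff, mem_C0_iff, hτ]
    constructor
    · intro _ h'; exact h h'
    · intro _; linarith [hx.2]

/-- the map on the base space intertwining with the shift -/
def T0 (ω : Gsp) : Gsp := fun i =>
  match i with
  | none => ω none + half
  | some j => ω (some (j + (if ω none ∈ C0 then 1 else 0)))

def ψ0 (ω : Gsp) : Gsp := fun i =>
  match i with
  | none => ω none + half
  | some j => ω (some (j + 1))

def ψ1 (ω : Gsp) : Gsp := fun i =>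
  match i with
  | none => ω none + half
  | some j => ω (some j)

/-- the reindexing automorphism -/
def re (ω : Gsp) : Gsp := fun i =>
  match i with
  | none => ω none
  | some j => ω (some (j + 1))

def gh : Gsp := fun i => match i with | none => half | some _ => 0

lemma ψ1_eq (ω : Gsp) : ψ1 ω = gh + ω := by
  funext i
  match i with
  | none => show ω none + half = gh none + ω none; rw [show gh none = half from rfl, add_comm]
  | some j => show ω (some j) = gh (some j) + ω (some j)
              rw [show gh (some j) = 0 from rfl, zero_add]

lemma ψ0_eq (ω : Gsp) : ψ0 ω = gh + re ω := by
  funext i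
  match i with
  | none => show ω none + half = gh none + ω none; rw [show gh none = half from rfl, add_comm]
  | some j => show ω (some (j+1)) = gh (some j) + ω (some (j+1))
              rw [show gh (some j) = 0 from rfl, zero_add]

lemma measurable_re : Measurable re := by
  apply measurable_pi_lambda
  intro i
  match i with
  | none => exact measurable_pi_apply none
  | some j => exact measurable_pi_apply _

lemma map_re : μ0.map re = μ0 := by
  refine map_eq_of_hom μ0 re ?_ (fun x y => by
    funext i
    match i with
    | none => rfl
    | some j => rfl) ?_
  · exact continuous_pi fun i => by
      match i with
      | none => exact continuous_apply none
      | some j => exact continuous_apply _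
  · intro ω
    refine ⟨fun i => match i with
      | none => ω none
      | some j => ω (some (j - 1)), ?_⟩
    funext i
    match i with
    | none => rfl
    | some j => show ω (some (j + 1 - 1)) = ω (some j); norm_num

lemma measurable_ψ0 : Measurable ψ0 := by
  apply measurable_pi_lambda
  intro i
  match i with
  | none =>
      have h1 : Measurable fun ω : Gsp => ω none := measurable_pi_apply none
      exact h1.add_const half
  | some j => exact measurable_pi_apply _

lemma measurable_ψ1 : Measurable ψ1 := by
  apply measurable_pi_lambda
  intro i
  match i with
  | none =>
      have h1 : Measurable fun ω : Gsp => ω none := measurable_pi_apply none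
      exact h1.add_const half
  | some j => exact measurable_pi_apply _

lemma map_ψ0 : μ0.map ψ0 = μ0 := by
  have h : ψ0 = (fun ω => gh + ω) ∘ re := by funext ω; rw [Function.comp_apply, ← ψ0_eq]
  rw [h, ← Measure.map_map (measurable_const_add gh) measurable_re, map_re,
    MeasureTheory.map_add_left_eq_self μ0 gh]

lemma map_ψ1 : μ0.map ψ1 = μ0 := by
  have h : ψ1 = (fun ω => gh + ω) := by funext ω; rw [← ψ1_eq]
  rw [h, MeasureTheory.map_add_left_eq_self μ0 gh]

lemma T0_eq_ψ0 {ω : Gsp} (h : ω none ∈ C0) : T0 ω = ψ0 ω := by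
  funext i
  match i with
  | none => rfl
  | some j => show ω (some (j + (if ω none ∈ C0 then 1 else 0))) = ω (some (j+1))
              rw [if_pos h]

lemma T0_eq_ψ1 {ω : Gsp} (h : ω none ∉ C0) : T0 ω = ψ1 ω := by
  funext i
  match i with
  | none => rfl
  | some j => show ω (some (j + (if ω none ∈ C0 then 1 else 0))) = ω (some j)
              rw [if_neg h, add_zero]

lemma measurable_T0 : Measurable T0 := by
  have h : T0 = fun ω => if ω none ∈ C0 then ψ0 ω else ψ1 ω := by
    funext ω
    by_cases h : ω none ∈ C0
    · rw [if_pos h, T0_eq_ψ0 h]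
    · rw [if_neg h, T0_eq_ψ1 h]
  rw [h]
  exact Measurable.ite ((measurable_pi_apply none) measurable_C0) measurable_ψ0 measurable_ψ1

lemma map_T0 : μ0.map T0 = μ0 := by
  ext A hA
  rw [Measure.map_apply measurable_T0 hA]
  set C : Set Gsp := {ω : Gsp | ω none ∈ C0} with hCdef
  have hC : MeasurableSet C := (measurable_pi_apply none) measurable_C0
  have hψ0none : ∀ ω : Gsp, (ψ0 ω) none = ω none + half := fun ω => rfl
  have hψ1none : ∀ ω : Gsp, (ψ1 ω) none = ω none + half := fun ω => rfl
  have h0 : T0 ⁻¹' A ∩ C = ψ0 ⁻¹' (A ∩ Cᶜ) := by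
    ext ω
    simp only [mem_inter_iff, mem_preimage, mem_compl_iff, hCdef, mem_setOf_eq]
    constructor
    · rintro ⟨hTA, hωC⟩
      rw [T0_eq_ψ0 hωC] at hTA
      refine ⟨hTA, ?_⟩
      rw [hψ0none, add_half_mem_C0_iff]
      exact fun h' => h' hωC
    · rintro ⟨hA', hc'⟩
      rw [hψ0none, add_half_mem_C0_iff, not_not] at hc'
      exact ⟨by rwa [T0_eq_ψ0 hc'], hc'⟩
  have h1 : T0 ⁻¹' A ∩ Cᶜ = ψ1 ⁻¹' (A ∩ C) := by
    ext ω
    simp only [mem_inter_iff, mem_preimage, mem_compl_iff, hCdef, mem_setOf_eq]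
    constructor
    · rintro ⟨hTA, hωC⟩
      rw [T0_eq_ψ1 hωC] at hTA
      refine ⟨hTA, ?_⟩
      rw [hψ1none, add_half_mem_C0_iff]
      exact hωC
    · rintro ⟨hA', hc'⟩
      rw [hψ1none, add_half_mem_C0_iff] at hc'
      exact ⟨by rwa [T0_eq_ψ1 hc'], hc'⟩
  calc μ0 (T0 ⁻¹' A) = μ0 (T0 ⁻¹' A ∩ C) + μ0 (T0 ⁻¹' A \ C) :=
        (measure_inter_add_diff _ hC).symm
    _ = μ0 (ψ0 ⁻¹' (A ∩ Cᶜ)) + μ0 (ψ1 ⁻¹' (A ∩ C)) := by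
        rw [diff_eq, h0, h1]
    _ = (μ0.map ψ0) (A ∩ Cᶜ) + (μ0.map ψ1) (A ∩ C) := by
        rw [Measure.map_apply measurable_ψ0 (hA.inter hC.compl),
          Measure.map_apply measurable_ψ1 (hA.inter hC)]
    _ = μ0 (A ∩ Cᶜ) + μ0 (A ∩ C) := by rw [map_ψ0, map_ψ1]
    _ = μ0 A := by
        rw [add_comm, ← diff_eq]
        exact measure_inter_add_diff _ hC

lemma off_T0 (ω : Gsp) : off (T0 ω) = 1 - off ω := by
  by_cases h : ω none ∈ C0
  · have hT : (T0 ω) none ∉ C0 := by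
      rw [show (T0 ω) none = ω none + half from rfl, add_half_mem_C0_iff]
      exact fun h' => h' h
    rw [off, off, if_pos h, if_neg hT]; norm_num
  · have hT : (T0 ω) none ∈ C0 := by
      rw [show (T0 ω) none = ω none + half from rfl, add_half_mem_C0_iff]
      exact h
    rw [off, off, if_neg h, if_pos hT]; norm_num

lemma Fp_T0 (p : ℝ) (ω : Gsp) (n : ℤ) : Fp p (T0 ω) n = Fp p ω (n + 1) := by
  by_cases h : ω none ∈ C0
  · have hoffω : off ω = 0 := if_pos h
    have hoffT : off (T0 ω) = 1 := by rw [off_T0, hoffω]; norm_num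
    have hcoord : (T0 ω) (some (jb n 1)) = ω (some (jb n 1 + 1)) := by
      show ω (some (jb n 1 + (if ω none ∈ C0 then 1 else 0))) = _
      rw [if_pos h]
    have hjb : jb n 1 + 1 = jb (n+1) 0 := by unfold jb; omega
    have hmod : (n - 1) % 2 = (n + 1 - 0) % 2 := by omega
    have hS : Sset p n 1 = Sset p (n+1) 0 := by rw [Sset, Sset, hmod]
    rw [Fp, Fp, hoffT, hoffω, hcoord, hjb, hS]
  · have hoffω : off ω = 1 := if_neg h
    have hoffT : off (T0 ω) = 0 := by rw [off_T0, hoffω]; norm_num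
    have hcoord : (T0 ω) (some (jb n 0)) = ω (some (jb n 0)) := by
      show ω (some (jb n 0 + (if ω none ∈ C0 then 1 else 0))) = _
      rw [if_neg h, add_zero]
    have hjb : jb n 0 = jb (n+1) 1 := by unfold jb; omega
    have hmod : (n - 0) % 2 = (n + 1 - 1) % 2 := by omega
    have hS : Sset p n 0 = Sset p (n+1) 1 := by rw [Sset, Sset, hmod]
    rw [Fp, Fp, hoffT, hoffω, hcoord, hjb, hS]

lemma shift_invariant (p : ℝ) :
    (μ0.map (Fp p)).map (fun η (n : ℤ) => η (n + 1)) = μ0.map (Fp p) := by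
  have hshift : Measurable (fun η : ℤ → Bool => fun n => η (n + 1)) :=
    measurable_pi_lambda _ fun n => measurable_pi_apply _
  rw [Measure.map_map hshift (measurable_Fp p)]
  have h : (fun η : ℤ → Bool => fun n => η (n + 1)) ∘ Fp p = Fp p ∘ T0 := by
    funext ω
    funext n
    exact (Fp_T0 p ω n).symm
  rw [h, ← Measure.map_map (measurable_Fp p) measurable_T0, map_T0]
open scoped Classical

lemma mem_C1_iff_not (x : AddCircle (1:ℝ)) : x ∈ C1 ↔ x ∉ C0 := by
  rw [mem_C1_iff, mem_C0_iff]

lemma event_one (p : ℝ) (n : ℤ) : {ω : Gsp | Fp p ω n = true} =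
    {ω : Gsp | ω none ∈ C0 ∧ ω (some (jb n 0)) ∈ Sset p n 0} ∪
    {ω : Gsp | ω none ∈ C1 ∧ ω (some (jb n 1)) ∈ Sset p n 1} := by
  ext ω
  rw [mem_union, mem_setOf_eq, mem_setOf_eq, mem_setOf_eq, Fp_true_iff]
  by_cases h : ω none ∈ C0
  · have h1 : ω none ∉ C1 := fun h' => (mem_C1_iff_not _).mp h' h
    have hoff : off ω = 0 := if_pos h
    rw [hoff]
    constructor
    · intro hS; exact Or.inl ⟨h, hS⟩
    · rintro (⟨_, hS⟩ | ⟨hc, _⟩)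
      · exact hS
      · exact absurd hc h1
  · have h1 : ω none ∈ C1 := (mem_C1_iff_not _).mpr h
    have hoff : off ω = 1 := if_neg h
    rw [hoff]
    constructor
    · intro hS; exact Or.inr ⟨h1, hS⟩
    · rintro (⟨hc, _⟩ | ⟨_, hS⟩)
      · exact absurd hc h
      · exact hS

lemma event_disjoint {P Q : Gsp → Prop} :
    Disjoint {ω : Gsp | ω none ∈ C0 ∧ P ω} {ω : Gsp | ω none ∈ C1 ∧ Q ω} := by
  rw [Set.disjoint_left]
  rintro ω ⟨h0, _⟩ ⟨h1, _⟩
  exact (mem_C1_iff_not _).mp h1 h0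

variable {p : ℝ}

lemma P_one (hp0 : 0 ≤ p) (hp2 : 2*p ≤ 1) (n : ℤ) :
    μ0 {ω : Gsp | Fp p ω n = true} = ENNReal.ofReal (1 - p) := by
  rw [event_one]
  have hmeas : MeasurableSet {ω : Gsp | ω none ∈ C1 ∧ ω (some (jb n 1)) ∈ Sset p n 1} := by
    show MeasurableSet ((fun ω : Gsp => ω none) ⁻¹' C1
      ∩ (fun ω : Gsp => ω (some (jb n 1))) ⁻¹' Sset p n 1)
    exact ((measurable_pi_apply none) measurable_C1).inter
      ((measurable_pi_apply _) (measurable_Sset p n 1))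
  rw [measure_union event_disjoint hmeas]
  rw [cyl2 (i := none) (j := some (jb n 0)) (by simp) measurable_C0 (measurable_Sset p n 0),
    cyl2 (i := none) (j := some (jb n 1)) (by simp) measurable_C1 (measurable_Sset p n 1),
    volume_C0, volume_C1, volume_Sset hp0 hp2, volume_Sset hp0 hp2,
    ← ENNReal.ofReal_mul (show (0:ℝ) ≤ 1/2 by norm_num),
    ← ENNReal.ofReal_add (by nlinarith) (by nlinarith)]
  congr 1
  ring

/-- the same-block pair event -/
lemma pair_piece_near (hp0 : 0 ≤ p) (hp2 : 2*p ≤ 1) {Cs : Set (AddCircle (1:ℝ))}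
    (hCs : MeasurableSet Cs) (hCvol : volume Cs = ENNReal.ofReal (1/2))
    {x c : ℤ} (hc : (x - c) % 2 = 0) :
    μ0 {ω : Gsp | ω none ∈ Cs ∧ (ω (some (jb x c)) ∈ Sset p x c ∧
        ω (some (jb (x+1) c)) ∈ Sset p (x+1) c)} =
      ENNReal.ofReal (1/2) * ENNReal.ofReal (1 - 2*p) := by
  have hjb : jb (x+1) c = jb x c := by unfold jb; omega
  have hSx : Sset p x c = Lset p := if_pos hc
  have hSy : Sset p (x+1) c = Rset p := by
    rw [Sset, if_neg]; omega
  have hset : {ω : Gsp | ω none ∈ Cs ∧ (ω (some (jb x c)) ∈ Sset p x c ∧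
      ω (some (jb (x+1) c)) ∈ Sset p (x+1) c)}
      = {ω : Gsp | ω none ∈ Cs ∧ ω (some (jb x c)) ∈ Lset p ∩ Rset p} := by
    ext ω
    rw [mem_setOf_eq, mem_setOf_eq, hjb, hSx, hSy, mem_inter_iff]
  rw [hset, cyl2 (by simp) hCs ((measurable_Lset p).inter (measurable_Rset p)),
    hCvol, volume_LRset hp0 hp2]

/-- the distinct-blocks pair event -/
lemma pair_piece_far (hp0 : 0 ≤ p) (hp2 : 2*p ≤ 1) {Cs : Set (AddCircle (1:ℝ))}
    (hCs : MeasurableSet Cs) (hCvol : volume Cs = ENNReal.ofReal (1/2))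
    {x y c : ℤ} (hc : jb x c ≠ jb y c) :
    μ0 {ω : Gsp | ω none ∈ Cs ∧ (ω (some (jb x c)) ∈ Sset p x c ∧
        ω (some (jb y c)) ∈ Sset p y c)} =
      ENNReal.ofReal (1/2) * (ENNReal.ofReal (1 - p) * ENNReal.ofReal (1 - p)) := by
  rw [cyl3 (by simp) (by simp) (by simpa using hc) hCs (measurable_Sset p x c)
    (measurable_Sset p y c), hCvol, volume_Sset hp0 hp2, volume_Sset hp0 hp2, mul_assoc]

lemma event_pair (p : ℝ) (x y : ℤ) :
    {ω : Gsp | Fp p ω x = true ∧ Fp p ω y = true} =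
    {ω : Gsp | ω none ∈ C0 ∧ (ω (some (jb x 0)) ∈ Sset p x 0 ∧
        ω (some (jb y 0)) ∈ Sset p y 0)} ∪
    {ω : Gsp | ω none ∈ C1 ∧ (ω (some (jb x 1)) ∈ Sset p x 1 ∧
        ω (some (jb y 1)) ∈ Sset p y 1)} := by
  ext ω
  rw [mem_union, mem_setOf_eq, mem_setOf_eq, mem_setOf_eq, Fp_true_iff, Fp_true_iff]
  by_cases h : ω none ∈ C0
  · have h1 : ω none ∉ C1 := fun h' => (mem_C1_iff_not _).mp h' h
    have hoff : off ω = 0 := if_pos h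
    rw [hoff]
    constructor
    · intro hS; exact Or.inl ⟨h, hS⟩
    · rintro (⟨_, hS⟩ | ⟨hc, _⟩)
      · exact hS
      · exact absurd hc h1
  · have h1 : ω none ∈ C1 := (mem_C1_iff_not _).mpr h
    have hoff : off ω = 1 := if_neg h
    rw [hoff]
    constructor
    · intro hS; exact Or.inr ⟨h1, hS⟩
    · rintro (⟨hc, _⟩ | ⟨_, hS⟩)
      · exact absurd hc h
      · exact hS

lemma pair_meas (p : ℝ) (x y : ℤ) {Cs : Set (AddCircle (1:ℝ))} (hCs : MeasurableSet Cs) :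
    MeasurableSet {ω : Gsp | ω none ∈ Cs ∧ (ω (some (jb x 1)) ∈ Sset p x 1 ∧
        ω (some (jb y 1)) ∈ Sset p y 1)} := by
  show MeasurableSet ((fun ω : Gsp => ω none) ⁻¹' Cs
    ∩ ((fun ω : Gsp => ω (some (jb x 1))) ⁻¹' Sset p x 1
      ∩ (fun ω : Gsp => ω (some (jb y 1))) ⁻¹' Sset p y 1))
  have h1 : Measurable fun ω : Gsp => ω (some (jb x 1)) := measurable_pi_apply _
  have h2 : Measurable fun ω : Gsp => ω (some (jb y 1)) := measurable_pi_apply _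
  have h0 : Measurable fun ω : Gsp => ω none := measurable_pi_apply _
  exact (h0 hCs).inter ((h1 (measurable_Sset p x 1)).inter (h2 (measurable_Sset p y 1)))

lemma P_pair_near (hp0 : 0 ≤ p) (hp2 : 2*p ≤ 1) (x : ℤ) :
    μ0 {ω : Gsp | Fp p ω x = true ∧ Fp p ω (x+1) = true}
      = ENNReal.ofReal ((1 - 2*p + (1-p)*(1-p))/2) := by
  have hp1 : p ≤ 1 := by linarith
  rw [event_pair, measure_union event_disjoint (pair_meas p x (x+1) measurable_C1)]
  have key : ∀ c : ℤ, (x - c) % 2 = 0 → ∀ {Cs : Set (AddCircle (1:ℝ))},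
      MeasurableSet Cs → volume Cs = ENNReal.ofReal (1/2) →
      μ0 {ω : Gsp | ω none ∈ Cs ∧ (ω (some (jb x c)) ∈ Sset p x c ∧
        ω (some (jb (x+1) c)) ∈ Sset p (x+1) c)}
      = ENNReal.ofReal (1/2) * ENNReal.ofReal (1 - 2*p) :=
    fun c hc _ hCs hCvol => pair_piece_near hp0 hp2 hCs hCvol hc
  have key' : ∀ c : ℤ, (x - c) % 2 = 1 → ∀ {Cs : Set (AddCircle (1:ℝ))},
      MeasurableSet Cs → volume Cs = ENNReal.ofReal (1/2) →
      μ0 {ω : Gsp | ω none ∈ Cs ∧ (ω (some (jb x c)) ∈ Sset p x c ∧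
        ω (some (jb (x+1) c)) ∈ Sset p (x+1) c)}
      = ENNReal.ofReal (1/2) * (ENNReal.ofReal (1 - p) * ENNReal.ofReal (1 - p)) :=
    fun c hc _ hCs hCvol => pair_piece_far hp0 hp2 hCs hCvol (by unfold jb; omega)
  have harith : ENNReal.ofReal (1/2) * ENNReal.ofReal (1 - 2*p)
      + ENNReal.ofReal (1/2) * (ENNReal.ofReal (1 - p) * ENNReal.ofReal (1 - p))
      = ENNReal.ofReal ((1 - 2*p + (1-p)*(1-p))/2) := by
    rw [← ENNReal.ofReal_mul (show (0:ℝ) ≤ 1-p by linarith),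
      ← ENNReal.ofReal_mul (show (0:ℝ) ≤ 1/2 by norm_num),
      ← ENNReal.ofReal_mul (show (0:ℝ) ≤ 1/2 by norm_num),
      ← ENNReal.ofReal_add (by nlinarith) (by nlinarith)]
    congr 1
    ring
  by_cases hpar : (x - 0) % 2 = 0
  · have hpar1 : (x - 1) % 2 = 1 := by omega
    rw [key 0 hpar measurable_C0 volume_C0, key' 1 hpar1 measurable_C1 volume_C1, harith]
  · have hpar0 : (x - 0) % 2 = 1 := by omega
    have hpar1 : (x - 1) % 2 = 0 := by omega
    rw [key' 0 hpar0 measurable_C0 volume_C0, key 1 hpar1 measurable_C1 volume_C1, add_comm]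
    exact harith

lemma P_pair_far (hp0 : 0 ≤ p) (hp2 : 2*p ≤ 1) {x y : ℤ}
    (h0 : jb x 0 ≠ jb y 0) (h1 : jb x 1 ≠ jb y 1) :
    μ0 {ω : Gsp | Fp p ω x = true ∧ Fp p ω y = true}
      = ENNReal.ofReal ((1-p)*(1-p)) := by
  have hp1 : p ≤ 1 := by linarith
  rw [event_pair, measure_union event_disjoint (pair_meas p x y measurable_C1),
    pair_piece_far hp0 hp2 measurable_C0 volume_C0 h0,
    pair_piece_far hp0 hp2 measurable_C1 volume_C1 h1,
    ← ENNReal.ofReal_mul (show (0:ℝ) ≤ 1-p by linarith),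
    ← ENNReal.ofReal_mul (show (0:ℝ) ≤ 1/2 by norm_num),
    ← ENNReal.ofReal_add (by nlinarith) (by nlinarith)]
  congr 1
  ring

lemma jb_ne {x y : ℤ} (h : 2 ≤ |x - y|) (c : ℤ) : jb x c ≠ jb y c := by
  have h' : 2 ≤ x - y ∨ 2 ≤ y - x := by
    rcases le_abs.mp h with h' | h'
    · exact Or.inl h'
    · exact Or.inr (by omega)
  unfold jb; omega

end RealizationSuperposition
end

open RealizationSuperposition

/-- For each `1/2 ≤ α ≤ 1` there is a translation invariant point process on
`ℤ` with density `ρ = 1/(1 + √(2-2α))`, nearest-neighbour correlation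
`E[η(x)η(x+1)] = αρ²` and `E[η(x)η(y)] = ρ²` for `|x-y| ≥ 2`.  In particular
for `α = 1/2` the maximal density `1/2` is attained. -/
theorem realization_superposition_half_le_alpha
    (α : ℝ) (hα0 : 1 / 2 ≤ α) (hα1 : α ≤ 1) :
    ∃ μ : Measure (ℤ → Bool), IsProbabilityMeasure μ ∧
      μ.map (fun η (n : ℤ) => η (n + 1)) = μ ∧
      (∀ x : ℤ, (μ {η | η x = true}).toReal
        = 1 / (1 + Real.sqrt (2 - 2 * α))) ∧
      (∀ x : ℤ, (μ {η | η x = true ∧ η (x + 1) = true}).toReal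
        = α * (1 / (1 + Real.sqrt (2 - 2 * α))) ^ 2) ∧
      (∀ x y : ℤ, 2 ≤ |x - y| →
        (μ {η | η x = true ∧ η y = true}).toReal
          = (1 / (1 + Real.sqrt (2 - 2 * α))) ^ 2) := by
  set s : ℝ := Real.sqrt (2 - 2 * α) with hs
  have hs0 : 0 ≤ s := Real.sqrt_nonneg _
  have h2α : 0 ≤ 2 - 2 * α := by linarith
  have hs2 : s ^ 2 = 2 - 2 * α := Real.sq_sqrt h2α
  have hs1 : s ≤ 1 := by nlinarith [hs2, hs0]
  have hden : (0:ℝ) < 1 + s := by linarith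
  set p : ℝ := s / (1 + s) with hpdef
  have hp0 : 0 ≤ p := div_nonneg hs0 hden.le
  have hp2 : 2 * p ≤ 1 := by
    rw [hpdef]
    rw [show 2 * (s / (1 + s)) = (2 * s) / (1 + s) by ring, div_le_one hden]
    linarith
  have hp1 : p ≤ 1 := by linarith
  have hρ : 1 - p = 1 / (1 + s) := by
    rw [hpdef]; field_simp; ring
  refine ⟨μ0.map (Fp p), Measure.isProbabilityMeasure_map (measurable_Fp p).aemeasurable,
    shift_invariant p, ?_, ?_, ?_⟩
  · intro x
    have hms : MeasurableSet {η : ℤ → Bool | η x = true} := by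
      show MeasurableSet ((fun η : ℤ → Bool => η x) ⁻¹' {true})
      exact (measurable_pi_apply x) (measurableSet_singleton true)
    rw [Measure.map_apply (measurable_Fp p) hms,
      show (Fp p) ⁻¹' {η | η x = true} = {ω : Gsp | Fp p ω x = true} from rfl,
      P_one hp0 hp2 x, ENNReal.toReal_ofReal (by linarith), hρ]
  · intro x
    have hms : MeasurableSet {η : ℤ → Bool | η x = true ∧ η (x+1) = true} := by
      show MeasurableSet ((fun η : ℤ → Bool => η x) ⁻¹' {true}
        ∩ (fun η : ℤ → Bool => η (x+1)) ⁻¹' {true})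
      exact ((measurable_pi_apply x) (measurableSet_singleton true)).inter
        ((measurable_pi_apply (x+1)) (measurableSet_singleton true))
    rw [Measure.map_apply (measurable_Fp p) hms,
      show (Fp p) ⁻¹' {η | η x = true ∧ η (x+1) = true}
        = {ω : Gsp | Fp p ω x = true ∧ Fp p ω (x+1) = true} from rfl,
      P_pair_near hp0 hp2 x, ENNReal.toReal_ofReal (by nlinarith)]
    have e1 : 1 - 2*p = (1-s)/(1+s) := by
      rw [hpdef]; field_simp; ring
    have e2 : (1 - p) * (1 - p) = (1/(1+s))^2 := by rw [hρ]; ring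
    rw [e2, e1, show α = (2 - s^2)/2 by linarith]
    field_simp
    ring
  · intro x y hxy
    have hms : MeasurableSet {η : ℤ → Bool | η x = true ∧ η y = true} := by
      show MeasurableSet ((fun η : ℤ → Bool => η x) ⁻¹' {true}
        ∩ (fun η : ℤ → Bool => η y) ⁻¹' {true})
      exact ((measurable_pi_apply x) (measurableSet_singleton true)).inter
        ((measurable_pi_apply y) (measurableSet_singleton true))
    rw [Measure.map_apply (measurable_Fp p) hms,
      show (Fp p) ⁻¹' {η | η x = true ∧ η y = true}
        = {ω : Gsp | Fp p ω x = true ∧ Fp p ω y = true} from rfl,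
      P_pair_far hp0 hp2 (jb_ne hxy 0) (jb_ne hxy 1),
      ENNReal.toReal_ofReal (by nlinarith), hρ]
    ring
end

section
/- For each α ≥ 1, there exists a translation invariant point process on ℤ with density ρ = 1/(2α − 1), with E[η(x)η(x+1)] = αρ² and E[η(x)η(y)] = ρ² for |x − y| ≥ 2; hence the upper bound ρ ≤ 1/(2α−1) arising from the structure-function condition is sharp. -/
open MeasureTheory Set
open scoped ENNReal

namespace RealizationAux

noncomputable def step (p x : ℝ) : ℝ := if x < p then x / p else (x - p) / (1 - p)

lemma measurable_step (p : ℝ) : Measurable (step p) :=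
  Measurable.ite (measurableSet_lt measurable_id measurable_const)
    (measurable_id.div_const p) ((measurable_id.sub_const p).div_const (1 - p))

noncomputable def dyad (p x : ℝ) (n : ℕ) : Bool := decide ((step p)^[n] x < p)

lemma dyad_zero (p x : ℝ) : dyad p x 0 = decide (x < p) := rfl

lemma dyad_succ (p x : ℝ) (n : ℕ) : dyad p x (n + 1) = dyad p (step p x) n := by
  unfold dyad; rw [Function.iterate_succ_apply]

lemma measurable_dyad (p : ℝ) (n : ℕ) : Measurable (fun x => dyad p x n) := by
  apply measurable_to_bool
  have h : (fun x => dyad p x n) ⁻¹' {true} = (step p)^[n] ⁻¹' (Set.Iio p) := by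
    ext x; simp [dyad]
  rw [h]
  exact ((measurable_step p).iterate n) measurableSet_Iio

variable {ρ : ℝ}

lemma step_mem (hρ0 : 0 < ρ) (hρ1 : ρ < 1) {x : ℝ} (hx : x ∈ Ico (0:ℝ) 1) :
    step ρ x ∈ Ico (0:ℝ) 1 := by
  obtain ⟨hx0, hx1⟩ := hx
  unfold step
  split_ifs with h
  · constructor
    · positivity
    · rw [div_lt_one hρ0]; exact h
  · constructor
    · apply div_nonneg (by linarith) (by linarith)
    · rw [div_lt_one (by linarith)]; linarith

lemma measurableSet_dyadset (s : Finset ℕ) (v : ℕ → Bool) :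
    MeasurableSet {x : ℝ | ∀ i ∈ s, dyad ρ x i = v i} := by
  have : {x : ℝ | ∀ i ∈ s, dyad ρ x i = v i} = ⋂ i ∈ s, {x | dyad ρ x i = v i} := by
    ext x; simp
  rw [this]
  exact MeasurableSet.biInter s.countable_toSet
    (fun i _ => (measurable_dyad ρ i) (measurableSet_singleton (v i)))

lemma vol_preimage_div (hρ0 : 0 < ρ) {A : Set ℝ} (hA : MeasurableSet A) :
    volume ((fun x => x / ρ) ⁻¹' A) = ENNReal.ofReal ρ * volume A := by
  have h1 : (fun x : ℝ => x / ρ) = (fun x : ℝ => ρ⁻¹ * x) := by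
    funext x; rw [div_eq_inv_mul]
  rw [h1, ← Measure.map_apply (by fun_prop) hA, Real.map_volume_mul_left (by positivity)]
  simp [abs_of_pos hρ0]

lemma vol_preimage_affine (hρ0 : 0 < ρ) (hρ1 : ρ < 1) {A : Set ℝ} (hA : MeasurableSet A) :
    volume ((fun x => (x - ρ) / (1 - ρ)) ⁻¹' A) = ENNReal.ofReal (1 - ρ) * volume A := by
  have h1 : (fun x : ℝ => (x - ρ) / (1 - ρ)) = (fun y : ℝ => y / (1 - ρ)) ∘ (fun x => -ρ + x) := by
    funext x; simp [Function.comp]; ring_nf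
  rw [h1, Set.preimage_comp, measure_preimage_add, vol_preimage_div (by linarith) hA]

lemma master (hρ0 : 0 < ρ) (hρ1 : ρ < 1) :
    ∀ (n : ℕ) (s : Finset ℕ), s ⊆ Finset.range n → ∀ v : ℕ → Bool,
    volume {x : ℝ | x ∈ Ico (0:ℝ) 1 ∧ ∀ i ∈ s, dyad ρ x i = v i}
      = ENNReal.ofReal (∏ i ∈ s, if v i = true then ρ else 1 - ρ) := by
  intro n
  induction n with
  | zero =>
    intro s hs v
    have hs0 : s = ∅ := Finset.subset_empty.mp (by simpa using hs)
    subst hs0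
    have h1 : {x : ℝ | x ∈ Ico (0:ℝ) 1 ∧ ∀ i ∈ (∅ : Finset ℕ), dyad ρ x i = v i} = Ico (0:ℝ) 1 := by
      ext x; simp
    rw [h1, Real.volume_Ico]
    simp
  | succ n ih =>
    intro s hs v
    classical
    set s' : Finset ℕ := (s.erase 0).image (· - 1) with hs'def
    have hsub : s' ⊆ Finset.range n := by
      intro j hj
      simp only [hs'def, Finset.mem_image, Finset.mem_erase] at hj
      obtain ⟨i, ⟨hi0, his⟩, rfl⟩ := hj
      have := Finset.mem_range.mp (hs his)
      simp only [Finset.mem_range]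
      omega
    set v' : ℕ → Bool := fun j => v (j + 1) with hv'def
    have hA := ih s' hsub v'
    set A : Set ℝ := {x : ℝ | x ∈ Ico (0:ℝ) 1 ∧ ∀ i ∈ s', dyad ρ x i = v' i} with hAdef
    have hAmeas : MeasurableSet A := by
      have h1 : A = Ico (0:ℝ) 1 ∩ {x : ℝ | ∀ i ∈ s', dyad ρ x i = v' i} := by
        ext x; simp only [hAdef, mem_inter_iff, mem_setOf_eq]
      rw [h1]; exact measurableSet_Ico.inter (measurableSet_dyadset s' v')
    have hAsub : A ⊆ Ico (0:ℝ) 1 := fun x hx => hx.1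
    set P' : ℝ := ∏ j ∈ s', (if v' j = true then ρ else 1 - ρ) with hP'def
    have hP'nonneg : 0 ≤ P' := Finset.prod_nonneg (fun j _ => by
      split <;> linarith)
    -- key equivalence
    have key : ∀ x ∈ Ico (0:ℝ) 1,
        ((∀ i ∈ s, dyad ρ x i = v i) ↔
          ((0 ∈ s → decide (x < ρ) = v 0) ∧ ∀ j ∈ s', dyad ρ (step ρ x) j = v' j)) := by
      intro x _
      constructor
      · intro h
        refine ⟨fun h0 => h 0 h0, fun j hj => ?_⟩
        simp only [hs'def, Finset.mem_image, Finset.mem_erase] at hj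
        obtain ⟨i, ⟨hi0, his⟩, rfl⟩ := hj
        have hi1 : i - 1 + 1 = i := by omega
        have h1 := h i his
        have h2 : dyad ρ x ((i-1)+1) = v ((i-1)+1) := by rwa [hi1]
        rw [dyad_succ] at h2
        exact h2
      · rintro ⟨h0, h'⟩ i his
        match i with
        | 0 => exact h0 his
        | (k+1) =>
          have hk : k ∈ s' := by
            simp only [hs'def, Finset.mem_image, Finset.mem_erase]
            exact ⟨k+1, ⟨Nat.succ_ne_zero k, his⟩, rfl⟩
          rw [dyad_succ]
          exact h' k hk
    -- product reindexing
    have hprodE : P' = ∏ i ∈ s.erase 0, (if v i = true then ρ else 1 - ρ) := by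
      rw [hP'def, hs'def, Finset.prod_image (by
        intro i hi j hj hij
        have hi0 : i ≠ 0 := (Finset.mem_erase.mp hi).1
        have hj0 : j ≠ 0 := (Finset.mem_erase.mp hj).1
        have hij' : i - 1 = j - 1 := hij
        omega)]
      apply Finset.prod_congr rfl
      intro i hi
      have hi0 : i ≠ 0 := (Finset.mem_erase.mp hi).1
      have h1 : i - 1 + 1 = i := by omega
      simp only [hv'def, h1]
    -- the two pieces
    set L : Set ℝ := (fun x : ℝ => x / ρ) ⁻¹' A with hLdef
    set R : Set ℝ := (fun x : ℝ => (x - ρ) / (1 - ρ)) ⁻¹' A with hRdef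
    have h1ρ : (0:ℝ) < 1 - ρ := by linarith
    have hLmem : ∀ x : ℝ, x ∈ L ↔ (x ∈ Ico (0:ℝ) 1 ∧ x < ρ ∧ step ρ x ∈ A) := by
      intro x
      constructor
      · intro hx
        have hxa : x / ρ ∈ A := hx
        obtain ⟨h0, h1⟩ := hAsub hxa
        have hx0 : 0 ≤ x := by
          have := (le_div_iff₀ hρ0).mp h0
          linarith
        have hxρ : x < ρ := (div_lt_one hρ0).mp h1
        refine ⟨⟨hx0, by linarith⟩, hxρ, ?_⟩
        have : step ρ x = x / ρ := if_pos hxρ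
        rw [this]; exact hxa
      · rintro ⟨hx, hxρ, hst⟩
        have : step ρ x = x / ρ := if_pos hxρ
        rw [hLdef]
        simpa [this ▸ hst] using (this ▸ hst)
    have hRmem : ∀ x : ℝ, x ∈ R ↔ (x ∈ Ico (0:ℝ) 1 ∧ ¬ x < ρ ∧ step ρ x ∈ A) := by
      intro x
      constructor
      · intro hx
        have hxa : (x - ρ) / (1 - ρ) ∈ A := hx
        obtain ⟨h0, h1⟩ := hAsub hxa
        have hx0 : ρ ≤ x := by
          have := (le_div_iff₀ h1ρ).mp h0
          linarith
        have hx1 : x < 1 := by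
          have := (div_lt_one h1ρ).mp h1
          linarith
        refine ⟨⟨by linarith, hx1⟩, not_lt.mpr hx0, ?_⟩
        have : step ρ x = (x - ρ) / (1 - ρ) := if_neg (not_lt.mpr hx0)
        rw [this]; exact hxa
      · rintro ⟨hx, hxρ, hst⟩
        have : step ρ x = (x - ρ) / (1 - ρ) := if_neg hxρ
        rw [hRdef]
        simpa using (this ▸ hst)
    have hLvol : volume L = ENNReal.ofReal (ρ * P') := by
      rw [hLdef, vol_preimage_div hρ0 hAmeas, hA]
      exact (ENNReal.ofReal_mul hρ0.le).symm
    have hRvol : volume R = ENNReal.ofReal ((1 - ρ) * P') := by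
      rw [hRdef, vol_preimage_affine hρ0 hρ1 hAmeas, hA]
      exact (ENNReal.ofReal_mul h1ρ.le).symm
    have hstepA : ∀ x ∈ Ico (0:ℝ) 1, ((∀ j ∈ s', dyad ρ (step ρ x) j = v' j) ↔ step ρ x ∈ A) := by
      intro x hx
      constructor
      · intro h
        exact ⟨step_mem hρ0 hρ1 hx, h⟩
      · intro h
        exact h.2
    by_cases h0s : 0 ∈ s
    · have hsplit : (∏ i ∈ s, if v i = true then ρ else 1 - ρ)
          = (if v 0 = true then ρ else 1 - ρ) * P' := by
        rw [hprodE]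
        exact (Finset.mul_prod_erase s (fun i => if v i = true then ρ else 1 - ρ) h0s).symm
      cases hv0 : v 0 with
      | true =>
        have hSL : {x : ℝ | x ∈ Ico (0:ℝ) 1 ∧ ∀ i ∈ s, dyad ρ x i = v i} = L := by
          ext x
          simp only [mem_setOf_eq, hLmem x]
          constructor
          · rintro ⟨hx, h⟩
            obtain ⟨h0, h'⟩ := (key x hx).mp h
            have hxρ : x < ρ := by
              have := h0 h0s
              rw [hv0] at this
              exact of_decide_eq_true this
            exact ⟨hx, hxρ, (hstepA x hx).mp h'⟩
          · rintro ⟨hx, hxρ, hst⟩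
            refine ⟨hx, (key x hx).mpr ⟨fun _ => ?_, ((hstepA x hx).mpr hst)⟩⟩
            rw [hv0, decide_eq_true_eq]
            exact hxρ
        rw [hSL, hLvol, hsplit, hv0]
        simp
      | false =>
        have hSR : {x : ℝ | x ∈ Ico (0:ℝ) 1 ∧ ∀ i ∈ s, dyad ρ x i = v i} = R := by
          ext x
          simp only [mem_setOf_eq, hRmem x]
          constructor
          · rintro ⟨hx, h⟩
            obtain ⟨h0, h'⟩ := (key x hx).mp h
            have hxρ : ¬ x < ρ := by
              have := h0 h0s
              rw [hv0] at this
              simpa using this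
            exact ⟨hx, hxρ, (hstepA x hx).mp h'⟩
          · rintro ⟨hx, hxρ, hst⟩
            refine ⟨hx, (key x hx).mpr ⟨fun _ => ?_, ((hstepA x hx).mpr hst)⟩⟩
            rw [hv0]
            simpa using hxρ
        rw [hSR, hRvol, hsplit, hv0]
        simp
    · have hSLR : {x : ℝ | x ∈ Ico (0:ℝ) 1 ∧ ∀ i ∈ s, dyad ρ x i = v i} = L ∪ R := by
        ext x
        simp only [mem_setOf_eq, mem_union, hLmem x, hRmem x]
        constructor
        · rintro ⟨hx, h⟩
          obtain ⟨h0, h'⟩ := (key x hx).mp h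
          by_cases hxρ : x < ρ
          · exact Or.inl ⟨hx, hxρ, (hstepA x hx).mp h'⟩
          · exact Or.inr ⟨hx, hxρ, (hstepA x hx).mp h'⟩
        · rintro (⟨hx, hxρ, hst⟩ | ⟨hx, hxρ, hst⟩) <;>
            exact ⟨hx, (key x hx).mpr ⟨fun h0 => absurd h0 h0s, (hstepA x hx).mpr hst⟩⟩
      have hdisj : Disjoint L R := by
        rw [Set.disjoint_left]
        intro x hxL hxR
        exact ((hRmem x).mp hxR).2.1 ((hLmem x).mp hxL).2.1
      have hRm : MeasurableSet R :=
        ((measurable_id.sub_const ρ).div_const (1 - ρ)) hAmeas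
      rw [hSLR, measure_union hdisj hRm, hLvol, hRvol,
        ← ENNReal.ofReal_add (by positivity) (by positivity)]
      have hsum : ρ * P' + (1 - ρ) * P' = P' := by ring
      rw [hsum, hprodE, Finset.erase_eq_of_notMem h0s]

noncomputable def cmap (ρ : ℝ) (a : ℤ → ℕ) : ℝ → (ℤ → Bool) := fun x n => dyad ρ x (a n)

lemma measurable_cmap (ρ : ℝ) (a : ℤ → ℕ) : Measurable (cmap ρ a) :=
  measurable_pi_lambda _ fun n => measurable_dyad ρ (a n)

noncomputable def pm (ρ : ℝ) (a : ℤ → ℕ) : Measure (ℤ → Bool) :=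
  Measure.map (cmap ρ a) (volume.restrict (Ico (0:ℝ) 1))

instance instProbVolIco : IsProbabilityMeasure (volume.restrict (Ico (0:ℝ) 1)) := by
  constructor
  rw [Measure.restrict_apply_univ, Real.volume_Ico]
  simp

instance pm_prob (ρ : ℝ) (a : ℤ → ℕ) : IsProbabilityMeasure (pm ρ a) :=
  Measure.isProbabilityMeasure_map (measurable_cmap ρ a).aemeasurable

def pcyl (J : Finset ℤ) (v : ℤ → Bool) : Set (ℤ → Bool) := {f | ∀ j ∈ J, f j = v j}

lemma measurableSet_pcyl (J : Finset ℤ) (v : ℤ → Bool) : MeasurableSet (pcyl J v) := by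
  have h1 : pcyl J v = ⋂ j ∈ J, {f : ℤ → Bool | f j = v j} := by ext f; simp [pcyl]
  rw [h1]
  refine MeasurableSet.biInter J.countable_toSet (fun j _ => ?_)
  have h2 : {f : ℤ → Bool | f j = v j} = (fun f : ℤ → Bool => f j) ⁻¹' {v j} := rfl
  rw [h2]
  exact measurable_pi_apply j (measurableSet_singleton (v j))

def Cons (a : ℤ → ℕ) (J : Finset ℤ) (v : ℤ → Bool) : Prop :=
  ∀ j₁ ∈ J, ∀ j₂ ∈ J, a j₁ = a j₂ → v j₁ = v j₂

lemma pm_pcyl {ρ : ℝ} (hρ0 : 0 < ρ) (hρ1 : ρ < 1) (a : ℤ → ℕ) (J : Finset ℤ) (v : ℤ → Bool)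
    (h : Cons a J v) :
    pm ρ a (pcyl J v) = ENNReal.ofReal (∏ m ∈ J.image a,
      if (∀ j ∈ J, a j = m → v j = true) then ρ else 1 - ρ) := by
  classical
  set u : ℕ → Bool := fun m => decide (∀ j ∈ J, a j = m → v j = true) with hu
  have hu_a : ∀ j ∈ J, u (a j) = v j := by
    intro j hj
    cases hvj : v j with
    | true =>
      simp only [hu, decide_eq_true_eq]
      intro j' hj' he
      exact (h j' hj' j hj he).trans hvj
    | false =>
      simp only [hu, decide_eq_false_iff_not]
      intro hP
      exact absurd (hP j hj rfl) (by simp [hvj])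
  have hset : cmap ρ a ⁻¹' (pcyl J v) = {x : ℝ | ∀ m ∈ J.image a, dyad ρ x m = u m} := by
    ext x
    simp only [mem_preimage, pcyl, mem_setOf_eq, cmap, Finset.mem_image]
    constructor
    · rintro hf m ⟨j, hj, rfl⟩
      rw [hu_a j hj]
      exact hf j hj
    · intro hm j hj
      rw [← hu_a j hj]
      exact hm (a j) ⟨j, hj, rfl⟩
  rw [pm, Measure.map_apply (measurable_cmap ρ a) (measurableSet_pcyl J v),
    Measure.restrict_apply ((measurable_cmap ρ a) (measurableSet_pcyl J v)), hset]
  obtain ⟨N, hN⟩ := Finset.exists_nat_subset_range (J.image a)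
  have hmain := master hρ0 hρ1 N (J.image a) hN u
  have hseteq : {x : ℝ | ∀ m ∈ J.image a, dyad ρ x m = u m} ∩ Ico (0:ℝ) 1
      = {x : ℝ | x ∈ Ico (0:ℝ) 1 ∧ ∀ m ∈ J.image a, dyad ρ x m = u m} := by
    ext x; simp only [mem_inter_iff, mem_setOf_eq]; tauto
  rw [hseteq, hmain]
  congr 1
  apply Finset.prod_congr rfl
  intro m _
  by_cases hp : (∀ j ∈ J, a j = m → v j = true)
  · rw [if_pos hp]
    have h1 : u m = true := by simp only [hu, decide_eq_true_eq]; exact hp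
    rw [h1, if_pos rfl]
  · rw [if_neg hp]
    have h1 : u m = false := by simp only [hu, decide_eq_false_iff_not]; exact hp
    rw [h1]
    simp

lemma pm_pcyl_zero {ρ : ℝ} (a : ℤ → ℕ) (J : Finset ℤ) (v : ℤ → Bool)
    (h : ¬ Cons a J v) : pm ρ a (pcyl J v) = 0 := by
  have hset : cmap ρ a ⁻¹' (pcyl J v) = ∅ := by
    ext x
    simp only [mem_preimage, pcyl, mem_setOf_eq, mem_empty_iff_false, iff_false]
    intro hf
    apply h
    intro j₁ hj₁ j₂ hj₂ he
    rw [← hf j₁ hj₁, ← hf j₂ hj₂]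
    show dyad ρ x (a j₁) = dyad ρ x (a j₂)
    rw [he]
  rw [pm, Measure.map_apply (measurable_cmap ρ a) (measurableSet_pcyl J v), hset]
  simp

def PC : Set (Set (ℤ → Bool)) := {S | ∃ J v, S = pcyl J v}

lemma isPiSystem_PC : IsPiSystem PC := by
  rintro S ⟨J, v, rfl⟩ T ⟨K, w, rfl⟩ hne
  obtain ⟨f₀, h₁, h₂⟩ := hne
  refine ⟨J ∪ K, f₀, ?_⟩
  ext f
  simp only [mem_inter_iff, pcyl, mem_setOf_eq, Finset.mem_union]
  constructor
  · rintro ⟨hJ, hK⟩ j hj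
    cases hj with
    | inl hh => rw [hJ j hh, ← h₁ j hh]
    | inr hh => rw [hK j hh, ← h₂ j hh]
  · intro hf
    constructor
    · intro j hj; rw [hf j (Or.inl hj), h₁ j hj]
    · intro j hj; rw [hf j (Or.inr hj), h₂ j hj]

lemma generate_PC : (inferInstance : MeasurableSpace (ℤ → Bool)) = MeasurableSpace.generateFrom PC := by
  apply le_antisymm
  · rw [← generateFrom_measurableCylinders]
    apply MeasurableSpace.generateFrom_le
    intro t ht
    obtain ⟨s, S, hS, rfl⟩ := (mem_measurableCylinders t).mp ht
    have hcyl : cylinder s S = ⋃ (v : {v : (∀ i : s, Bool) // v ∈ S}),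
        pcyl s (fun j => if h : j ∈ s then (v : ∀ i : s, Bool) ⟨j, h⟩ else true) := by
      ext f
      simp only [mem_cylinder, mem_iUnion]
      constructor
      · intro hf
        refine ⟨⟨s.restrict f, hf⟩, ?_⟩
        intro j hj
        simp only [pcyl, mem_setOf_eq, dif_pos hj]
        rfl
      · rintro ⟨⟨v, hv⟩, hfv⟩
        have hres : s.restrict f = v := by
          funext j
          have h1 := hfv j.1 j.2
          simp only [dif_pos j.2] at h1
          simpa [Finset.restrict] using h1
        rw [hres]; exact hv
    rw [hcyl]
    exact MeasurableSet.iUnion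
      (fun v => MeasurableSpace.measurableSet_generateFrom ⟨s, _, rfl⟩)
  · apply MeasurableSpace.generateFrom_le
    rintro t ⟨J, v, rfl⟩
    exact measurableSet_pcyl J v

lemma ext_PC {μ ν : Measure (ℤ → Bool)} [IsProbabilityMeasure μ] [IsProbabilityMeasure ν]
    (h : ∀ (J : Finset ℤ) (v : ℤ → Bool), μ (pcyl J v) = ν (pcyl J v)) : μ = ν := by
  apply ext_of_generate_finite PC generate_PC isPiSystem_PC
  · rintro S ⟨J, v, rfl⟩; exact h J v
  · simp [measure_univ]

lemma pm_comp {ρ : ℝ} (hρ0 : 0 < ρ) (hρ1 : ρ < 1) {σ : ℕ → ℕ} (hσ : Function.Injective σ)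
    (a : ℤ → ℕ) : pm ρ (σ ∘ a) = pm ρ a := by
  classical
  apply ext_PC
  intro J v
  by_cases h : Cons a J v
  · have h' : Cons (σ ∘ a) J v := fun j₁ h₁ j₂ h₂ he => h j₁ h₁ j₂ h₂ (hσ he)
    rw [pm_pcyl hρ0 hρ1 _ J v h', pm_pcyl hρ0 hρ1 a J v h]
    congr 1
    have himg : J.image (σ ∘ a) = (J.image a).image σ := (Finset.image_image).symm
    rw [himg, Finset.prod_image (fun x _ y _ he => hσ he)]
    apply Finset.prod_congr rfl
    intro m _
    refine if_congr ?_ rfl rfl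
    constructor
    · intro hc j hj he; exact hc j hj (congrArg σ he)
    · intro hc j hj he; exact hc j hj (hσ he)
  · have h' : ¬ Cons (σ ∘ a) J v :=
      fun hc => h (fun j₁ h₁ j₂ h₂ he => hc j₁ h₁ j₂ h₂ (congrArg σ he))
    rw [pm_pcyl_zero _ J v h', pm_pcyl_zero a J v h]

lemma cons_const_true (a : ℤ → ℕ) (J : Finset ℤ) : Cons a J (fun _ => true) :=
  fun _ _ _ _ _ => rfl

lemma meas_single (x : ℤ) : MeasurableSet {f : ℤ → Bool | f x = true} := by
  have h2 : {f : ℤ → Bool | f x = true} = (fun f : ℤ → Bool => f x) ⁻¹' {true} := rfl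
  rw [h2]
  exact measurable_pi_apply x (measurableSet_singleton true)

lemma meas_pair (x y : ℤ) : MeasurableSet {f : ℤ → Bool | f x = true ∧ f y = true} := by
  have h2 : {f : ℤ → Bool | f x = true ∧ f y = true}
      = {f : ℤ → Bool | f x = true} ∩ {f : ℤ → Bool | f y = true} := rfl
  rw [h2]
  exact (meas_single x).inter (meas_single y)

lemma pm_single {ρ : ℝ} (hρ0 : 0 < ρ) (hρ1 : ρ < 1) (a : ℤ → ℕ) (x : ℤ) :
    pm ρ a {f | f x = true} = ENNReal.ofReal ρ := by
  classical
  have hset : {f : ℤ → Bool | f x = true} = pcyl {x} (fun _ => true) := by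
    ext f; simp [pcyl]
  rw [hset, pm_pcyl hρ0 hρ1 a _ _ (cons_const_true a _), Finset.image_singleton,
    Finset.prod_singleton, if_pos (fun j _ _ => rfl)]

lemma pm_pair {ρ : ℝ} (hρ0 : 0 < ρ) (hρ1 : ρ < 1) (a : ℤ → ℕ) {x y : ℤ} (hxy : x ≠ y) :
    pm ρ a {f | f x = true ∧ f y = true}
      = ENNReal.ofReal (if a x = a y then ρ else ρ * ρ) := by
  classical
  have hset : {f : ℤ → Bool | f x = true ∧ f y = true} = pcyl {x, y} (fun _ => true) := by
    ext f
    simp only [pcyl, mem_setOf_eq, Finset.mem_insert, Finset.mem_singleton]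
    constructor
    · rintro ⟨h1, h2⟩ j hj
      rcases hj with rfl | rfl
      exacts [h1, h2]
    · intro hf
      exact ⟨hf x (Or.inl rfl), hf y (Or.inr rfl)⟩
  have himg : ({x, y} : Finset ℤ).image a = {a x, a y} := by
    rw [Finset.image_insert, Finset.image_singleton]
  rw [hset, pm_pcyl hρ0 hρ1 a _ _ (cons_const_true a _), himg]
  congr 1
  have hifs : ∀ m ∈ ({a x, a y} : Finset ℕ),
      (if (∀ j ∈ ({x, y} : Finset ℤ), a j = m → (fun _ : ℤ => true) j = true)
        then ρ else 1 - ρ) = ρ := by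
    intro m _; exact if_pos (fun j _ _ => rfl)
  rw [Finset.prod_congr rfl hifs]
  by_cases h : a x = a y
  · rw [if_pos h]
    have h1 : ({a x, a y} : Finset ℕ) = {a y} := by rw [h]; exact Finset.pair_eq_singleton _
    rw [h1, Finset.prod_const, Finset.card_singleton, pow_one]
  · rw [if_neg h, Finset.prod_const,
      Finset.card_insert_of_notMem (by simpa using h), Finset.card_singleton, pow_two]

lemma toReal_comb {A B : ℝ} (hA : 0 ≤ A) (hB : 0 ≤ B) :
    ((2:ℝ≥0∞)⁻¹ * ENNReal.ofReal A + (2:ℝ≥0∞)⁻¹ * ENNReal.ofReal B).toReal = (A + B) / 2 := by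
  have hne1 : (2:ℝ≥0∞)⁻¹ * ENNReal.ofReal A ≠ ⊤ :=
    ENNReal.mul_ne_top (by simp) ENNReal.ofReal_ne_top
  have hne2 : (2:ℝ≥0∞)⁻¹ * ENNReal.ofReal B ≠ ⊤ :=
    ENNReal.mul_ne_top (by simp) ENNReal.ofReal_ne_top
  have h2 : ((2:ℝ≥0∞)⁻¹).toReal = (2:ℝ)⁻¹ := by simp
  rw [ENNReal.toReal_add hne1 hne2, ENNReal.toReal_mul, ENNReal.toReal_mul, h2,
    ENNReal.toReal_ofReal hA, ENNReal.toReal_ofReal hB]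
  ring

end RealizationAux

open RealizationAux in
/-- For each `α ≥ 1` there is a translation invariant point process on `ℤ`
with density `ρ = 1/(2α - 1)`, nearest-neighbour correlation
`E[η(x)η(x+1)] = αρ²` and `E[η(x)η(y)] = ρ²` for `|x-y| ≥ 2`; hence the
structure-function upper bound `ρ ≤ 1/(2α-1)` is sharp. -/
theorem realization_superposition_alpha_ge_one
    (α : ℝ) (hα : 1 ≤ α) :
    ∃ μ : Measure (ℤ → Bool), IsProbabilityMeasure μ ∧
      μ.map (fun η (n : ℤ) => η (n + 1)) = μ ∧
      (∀ x : ℤ, (μ {η | η x = true}).toReal = 1 / (2 * α - 1)) ∧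
      (∀ x : ℤ, (μ {η | η x = true ∧ η (x + 1) = true}).toReal
        = α * (1 / (2 * α - 1)) ^ 2) ∧
      (∀ x y : ℤ, 2 ≤ |x - y| →
        (μ {η | η x = true ∧ η y = true}).toReal
          = (1 / (2 * α - 1)) ^ 2) := by
  have hshift_meas : Measurable (fun η : ℤ → Bool => fun n : ℤ => η (n + 1)) :=
    measurable_pi_lambda _ fun n => measurable_pi_apply (n + 1)
  rcases eq_or_lt_of_le hα with heq | hα1
  · subst heq
    refine ⟨Measure.dirac (fun _ => true), inferInstance, ?_, ?_, ?_, ?_⟩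
    · rw [Measure.map_dirac' hshift_meas]
    · intro x
      rw [Measure.dirac_apply' _ (meas_single x)]
      have hm : (fun _ : ℤ => true) ∈ {f : ℤ → Bool | f x = true} := rfl
      rw [Set.indicator_of_mem hm]
      norm_num
    · intro x
      rw [Measure.dirac_apply' _ (meas_pair x (x+1))]
      have hm : (fun _ : ℤ => true) ∈ {f : ℤ → Bool | f x = true ∧ f (x+1) = true} := ⟨rfl, rfl⟩
      rw [Set.indicator_of_mem hm]
      norm_num
    · intro x y _
      rw [Measure.dirac_apply' _ (meas_pair x y)]
      have hm : (fun _ : ℤ => true) ∈ {f : ℤ → Bool | f x = true ∧ f y = true} := ⟨rfl, rfl⟩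
      rw [Set.indicator_of_mem hm]
      norm_num
  · set ρ : ℝ := 1 / (2 * α - 1) with hρdef
    have hβ : (1:ℝ) < 2 * α - 1 := by linarith
    have hβ0 : (2 * α - 1) ≠ 0 := by linarith
    have hρ0 : 0 < ρ := by rw [hρdef]; positivity
    have hρ1 : ρ < 1 := by rw [hρdef, div_lt_one (by linarith)]; linarith
    set enc : ℤ ≃ ℕ := Denumerable.eqv ℤ with henc
    set aT : ℤ → ℕ := fun n => enc (n / 2) with haT
    set aF : ℤ → ℕ := fun n => enc ((n - 1) / 2) with haF
    refine ⟨(2:ℝ≥0∞)⁻¹ • pm ρ aT + (2:ℝ≥0∞)⁻¹ • pm ρ aF, ?_, ?_, ?_, ?_, ?_⟩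
    · constructor
      simp only [Measure.add_apply, Measure.smul_apply, smul_eq_mul, measure_univ, mul_one]
      rw [ENNReal.inv_two_add_inv_two]
    · rw [Measure.map_add _ _ hshift_meas, Measure.map_smul, Measure.map_smul]
      have hmapa : ∀ a : ℤ → ℕ,
          (pm ρ a).map (fun η (n : ℤ) => η (n + 1)) = pm ρ (fun n => a (n + 1)) := by
        intro a
        rw [pm, pm, Measure.map_map hshift_meas (measurable_cmap ρ a)]
        rfl
      rw [hmapa, hmapa]
      have h1 : (fun n : ℤ => aF (n + 1)) = aT := by
        funext n
        simp only [haF, haT]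
        congr 1
        omega
      have hσinj : Function.Injective (fun k : ℕ => enc (enc.symm k + 1)) := by
        intro k₁ k₂ he
        have h3 := enc.injective he
        have h4 : enc.symm k₁ = enc.symm k₂ := by omega
        exact enc.symm.injective h4
      have h2 : (fun n : ℤ => aT (n + 1)) = (fun k : ℕ => enc (enc.symm k + 1)) ∘ aF := by
        funext n
        simp only [haT, haF, Function.comp_apply, Equiv.symm_apply_apply]
        congr 1
        omega
      rw [h1, h2, pm_comp hρ0 hρ1 hσinj aF]
      exact add_comm _ _
    · intro x
      simp only [Measure.add_apply, Measure.smul_apply, smul_eq_mul]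
      rw [pm_single hρ0 hρ1 aT x, pm_single hρ0 hρ1 aF x, toReal_comb hρ0.le hρ0.le]
      ring
    · intro x
      have hxy : x ≠ x + 1 := by omega
      simp only [Measure.add_apply, Measure.smul_apply, smul_eq_mul]
      rw [pm_pair hρ0 hρ1 aT hxy, pm_pair hρ0 hρ1 aF hxy]
      have hT : (aT x = aT (x + 1)) ↔ (x / 2 = (x + 1) / 2) := by
        simp only [haT]
        exact ⟨fun h => enc.injective h, fun h => congrArg enc h⟩
      have hF : (aF x = aF (x + 1)) ↔ ((x - 1) / 2 = (x + 1 - 1) / 2) := by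
        simp only [haF]
        exact ⟨fun h => enc.injective h, fun h => congrArg enc h⟩
      have halg : (ρ + ρ * ρ) / 2 = α * ρ ^ 2 := by
        rw [hρdef]
        field_simp
        ring
      rcases Int.even_or_odd x with ⟨k, hk⟩ | ⟨k, hk⟩
      · rw [if_pos (hT.mpr (by omega)), if_neg (by intro hc; have := hF.mp hc; omega),
          toReal_comb hρ0.le (by positivity)]
        rw [← halg]
      · rw [if_neg (by intro hc; have := hT.mp hc; omega), if_pos (hF.mpr (by omega)),
          toReal_comb (by positivity) hρ0.le]
        rw [← halg]
        ring
    · intro x y hd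
      have hor : 2 ≤ x - y ∨ 2 ≤ y - x := by
        rcases abs_cases (x - y) with ⟨h1, _⟩ | ⟨h1, _⟩ <;> rw [h1] at hd <;> omega
      have hxy : x ≠ y := by omega
      simp only [Measure.add_apply, Measure.smul_apply, smul_eq_mul]
      rw [pm_pair hρ0 hρ1 aT hxy, pm_pair hρ0 hρ1 aF hxy]
      have hT : ¬ (aT x = aT y) := by
        intro hc
        have := enc.injective hc
        omega
      have hF : ¬ (aF x = aF y) := by
        intro hc
        have := enc.injective hc
        omega
      rw [if_neg hT, if_neg hF, toReal_comb (by positivity) (by positivity)]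
      ring
end

section
/- Let g : ℤᵈ → [0,∞) be even with g(0) = 0 and suppose G₂ := g satisfies g(x) ≥ 1 for all x ≠ 0 and b := Π_{x ≠ 0} g(x) < ∞ (the product over x with g(x) ≠ 1 converges). For a finite Λ ⊂ ℤᵈ, a subset ξ ⊂ Λ, and 0 ≤ ρ ≤ 1/b, the signed sum Ξ(ξ) = Σ_{γ ⊂ Λ∖ξ} (−ρ)^{|γ|} Π_{y∈γ, x∈γ∖{y}} g(x−y)^{1/2} Π_{r∈ξ, y∈γ} g(r−y) is nonnegative. -/
/-!
Write `Ξ_A(ξ)` for the signed sum over `γ ⊆ A` and `w_T(s) = ∏_{x ∈ T} g(s - x)`. Deciding whether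
a site `r ∈ A` lies in `γ` gives `Ξ_A(ξ) = Ξ_{A∖r}(ξ) - ρ w_ξ(r) Ξ_{A∖r}(ξ ∪ {r})`, and the
right-hand side is a sum over `γ ⊆ A∖r` carrying the extra factor `1 - ρ w_ξ(r) w_γ(r)`. So one
proves by induction on `A` that such sums stay nonnegative with any finite family of extra factors
`1 - ρ w_{U_s}(s) w_γ(s)`, where `s ∉ U_s` and `s`, `U_s` avoid `A`. For `A = ∅` each factor is at
least `1 - ρ b ≥ 0`. Peeling `r` off `A` in the presence of extra factors also inserts `r` into
every `U_s` in the subtracted term; since `g ≥ 1`, each insertion changes that term by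
`-ρ w_{U_s}(s) (g(s - r) - 1)` times a sum of the same kind over `A∖r`, so it only decreases the
subtracted term and the induction closes.
-/

lemma Finset.prod_sub_le_of_prod_le {β : Type*} [AddGroup β] [DecidableEq β] {g : β → ℝ} {b : ℝ}
    (hb : ∀ S : Finset β, 0 ∉ S → ∏ x ∈ S, g x ≤ b) {T : Finset β} {s : β} (hs : s ∉ T) :
    ∏ r ∈ T, g (s - r) ≤ b := by
  rw [← Finset.prod_image fun x _ y _ h => sub_right_injective h]
  exact hb _ fun h0 => hs (by simpa [sub_eq_zero, eq_comm] using h0)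

namespace LeeYang

open Finset

noncomputable section

variable {α : Type*} {G : α → α → ℝ}

variable (G) in
def field (T : Finset α) (s : α) : ℝ :=
  ∏ r ∈ T, G s r

lemma field_nonneg (hG : ∀ x y, 0 ≤ G x y) {T : Finset α} {s : α} : 0 ≤ field G T s :=
  prod_nonneg fun _ _ => hG _ _

variable [DecidableEq α]

variable (G) in
def pairWeight (γ : Finset α) : ℝ :=
  ∏ y ∈ γ, ∏ x ∈ γ.erase y, Real.sqrt (G x y)

variable (G) in
/-- For `S = ∅` and `G x y = g (x - y)` this is `Ξ(ξ)` with `γ` ranging over subsets of `A`;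
each `s ∈ S` adds the factor `1 - ρ w_{U s}(s) w_γ(s)`, where `w_T(s) = field G T s`. -/
def leeYangSum (ρ : ℝ) (ξ A S : Finset α) (U : α → Finset α) : ℝ :=
  ∑ γ ∈ A.powerset, (-ρ) ^ #γ * pairWeight G γ * (∏ r ∈ ξ, field G γ r) *
    ∏ s ∈ S, (1 - ρ * field G (U s) s * field G γ s)

structure Admissible (ξ A S : Finset α) (U : α → Finset α) : Prop where
  disjoint_fixed : Disjoint ξ A
  disjoint_sites : Disjoint S A
  disjoint_sites_fixed : Disjoint S ξ
  notMem_self : ∀ s ∈ S, s ∉ U s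
  disjoint_constraint : ∀ s ∈ S, Disjoint (U s) A

section field

variable {T γ ξ : Finset α} {s r : α}

lemma field_insert (hr : r ∉ T) : field G (insert r T) s = G s r * field G T s :=
  prod_insert hr

lemma prod_field_insert (hsymm : ∀ x y, G x y = G y x) (hr : r ∉ γ) :
    ∏ x ∈ ξ, field G (insert r γ) x = field G ξ r * ∏ x ∈ ξ, field G γ x := by
  simp_rw [field_insert hr, prod_mul_distrib]
  exact congrArg (· * _) (prod_congr rfl fun x _ => hsymm x r)

lemma pairWeight_insert (hG : ∀ x y, 0 ≤ G x y) (hsymm : ∀ x y, G x y = G y x) (hr : r ∉ γ) :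
    pairWeight G (insert r γ) = pairWeight G γ * field G γ r := by
  have hrow : ∀ y ∈ γ, ∏ x ∈ (insert r γ).erase y, Real.sqrt (G x y) =
      Real.sqrt (G r y) * ∏ x ∈ γ.erase y, Real.sqrt (G x y) := fun y hy => by
    rw [erase_insert_of_ne (ne_of_mem_of_not_mem hy hr).symm,
      prod_insert fun h => hr (mem_of_mem_erase h)]
  have hpair : ∀ y ∈ γ, Real.sqrt (G y r) * Real.sqrt (G r y) = G r y := fun y _ => by
    rw [hsymm y r, Real.mul_self_sqrt (hG r y)]
  rw [pairWeight, prod_insert hr, erase_insert hr, prod_congr rfl hrow, prod_mul_distrib,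
    ← mul_assoc, ← prod_mul_distrib, prod_congr rfl hpair, mul_comm]
  rfl

end field

section leeYangSum

variable {ρ : ℝ} {ξ A S : Finset α} {U V : α → Finset α} {r t : α}

lemma leeYangSum_congr (h : ∀ s ∈ S, U s = V s) :
    leeYangSum G ρ ξ A S U = leeYangSum G ρ ξ A S V :=
  sum_congr rfl fun _ _ => congrArg _ (prod_congr rfl fun s hs => by rw [h s hs])

lemma leeYangSum_empty : leeYangSum G ρ ξ ∅ S U = ∏ s ∈ S, (1 - ρ * field G (U s) s) := by
  simp [leeYangSum, pairWeight, field]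

lemma leeYangSum_insert (hG : ∀ x y, 0 ≤ G x y) (hsymm : ∀ x y, G x y = G y x)
    (hr : r ∉ A) (hrξ : r ∉ ξ) (hrU : ∀ s ∈ S, r ∉ U s) :
    leeYangSum G ρ ξ (insert r A) S U = leeYangSum G ρ ξ A S U -
      ρ * field G ξ r * leeYangSum G ρ (insert r ξ) A S fun s => insert r (U s) := by
  rw [leeYangSum, sum_powerset_insert hr, sub_eq_add_neg, leeYangSum, leeYangSum, mul_sum,
    ← sum_neg_distrib]
  refine congrArg _ (sum_congr rfl fun γ hγ => ?_)
  have hrγ : r ∉ γ := fun h => hr (mem_powerset.mp hγ h)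
  have hfactor : ∀ s ∈ S, 1 - ρ * field G (U s) s * field G (insert r γ) s =
      1 - ρ * field G (insert r (U s)) s * field G γ s := fun s hs => by
    rw [field_insert hrγ, field_insert (hrU s hs)]; ring
  rw [card_insert_of_notMem hrγ, pairWeight_insert hG hsymm hrγ, prod_field_insert hsymm hrγ,
    prod_insert hrξ, prod_congr rfl hfactor]
  ring

lemma leeYangSum_eq_erase_sub (ht : t ∈ S) (htξ : t ∉ ξ) :
    leeYangSum G ρ ξ A S U = leeYangSum G ρ ξ A (S.erase t) U -
      ρ * field G (U t) t * leeYangSum G ρ (insert t ξ) A (S.erase t) U := by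
  rw [leeYangSum, leeYangSum, leeYangSum, mul_sum, ← sum_sub_distrib]
  refine sum_congr rfl fun γ _ => ?_
  rw [← mul_prod_erase S _ ht, prod_insert htξ]
  ring

lemma leeYangSum_update_insert_le (hG : ∀ x y, 0 ≤ G x y) (hG1 : ∀ x y, x ≠ y → 1 ≤ G x y)
    (hρ : 0 ≤ ρ) (ht : t ∈ S) (htξ : t ∉ ξ) (hrU : r ∉ U t) (hrt : r ≠ t)
    (hrest : 0 ≤ leeYangSum G ρ (insert t ξ) A (S.erase t) U) :
    leeYangSum G ρ ξ A S (Function.update U t (insert r (U t))) ≤ leeYangSum G ρ ξ A S U := by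
  have hoff : ∀ s ∈ S.erase t, Function.update U t (insert r (U t)) s = U s :=
    fun s hs => Function.update_of_ne (ne_of_mem_erase hs) _ _
  have hgap : 0 ≤ ρ * field G (U t) t * (G t r - 1) * leeYangSum G ρ (insert t ξ) A (S.erase t) U :=
    mul_nonneg (mul_nonneg (mul_nonneg hρ (field_nonneg hG)) (sub_nonneg.mpr (hG1 t r hrt.symm)))
      hrest
  rw [leeYangSum_eq_erase_sub ht htξ, leeYangSum_eq_erase_sub (U := U) ht htξ,
    leeYangSum_congr hoff, leeYangSum_congr hoff, Function.update_self, field_insert hrU]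
  linear_combination hgap

end leeYangSum

namespace Admissible

variable {ξ A S : Finset α} {U : α → Finset α} {r t : α}

lemma insert_fixed_erase_site (h : Admissible ξ A S U) (ht : t ∈ S) :
    Admissible (insert t ξ) A (S.erase t) U where
  disjoint_fixed :=
    disjoint_insert_left.mpr ⟨disjoint_left.mp h.disjoint_sites ht, h.disjoint_fixed⟩
  disjoint_sites := disjoint_of_subset_left (erase_subset t S) h.disjoint_sites
  disjoint_sites_fixed := disjoint_insert_right.mpr
    ⟨notMem_erase t S, disjoint_of_subset_left (erase_subset t S) h.disjoint_sites_fixed⟩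
  notMem_self s hs := h.notMem_self s (mem_of_mem_erase hs)
  disjoint_constraint s hs := h.disjoint_constraint s (mem_of_mem_erase hs)

lemma piecewise_insert (h : Admissible ξ A S U) (hrA : r ∉ A) (hrS : r ∉ S) (T : Finset α) :
    Admissible ξ A S (T.piecewise (fun s => insert r (U s)) U) where
  disjoint_fixed := h.disjoint_fixed
  disjoint_sites := h.disjoint_sites
  disjoint_sites_fixed := h.disjoint_sites_fixed
  notMem_self s hs := T.piecewise_cases (i := s) (fun s => insert r (U s)) U (fun V => s ∉ V)
    (mem_insert.not.mpr (not_or.mpr ⟨ne_of_mem_of_not_mem hs hrS, h.notMem_self s hs⟩))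
    (h.notMem_self s hs)
  disjoint_constraint s hs := T.piecewise_cases (i := s) (fun s => insert r (U s)) U
    (fun V => Disjoint V A)
    (disjoint_insert_left.mpr ⟨hrA, h.disjoint_constraint s hs⟩) (h.disjoint_constraint s hs)

lemma insert_fixed (h : Admissible ξ (insert r A) S U) (hr : r ∉ A) :
    Admissible (insert r ξ) A S U where
  disjoint_fixed := disjoint_insert_left.mpr
    ⟨hr, disjoint_of_subset_right (subset_insert r A) h.disjoint_fixed⟩
  disjoint_sites := disjoint_of_subset_right (subset_insert r A) h.disjoint_sites
  disjoint_sites_fixed := disjoint_insert_right.mpr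
    ⟨disjoint_right.mp h.disjoint_sites (mem_insert_self r A), h.disjoint_sites_fixed⟩
  notMem_self := h.notMem_self
  disjoint_constraint s hs :=
    disjoint_of_subset_right (subset_insert r A) (h.disjoint_constraint s hs)

lemma insert_site (h : Admissible ξ (insert r A) S U) (hr : r ∉ A) :
    Admissible ξ A (insert r S) (Function.update U r ξ) := by
  have hrξ : r ∉ ξ := disjoint_right.mp h.disjoint_fixed (mem_insert_self r A)
  have hrS : r ∉ S := disjoint_right.mp h.disjoint_sites (mem_insert_self r A)
  have hA : A ⊆ insert r A := subset_insert r A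
  refine ⟨disjoint_of_subset_right hA h.disjoint_fixed,
    disjoint_insert_left.mpr ⟨hr, disjoint_of_subset_right hA h.disjoint_sites⟩,
    disjoint_insert_left.mpr ⟨hrξ, h.disjoint_sites_fixed⟩, ?_, ?_⟩ <;>
  intro s hs <;> rcases mem_insert.mp hs with rfl | hs
  · simpa using hrξ
  · simpa [Function.update_of_ne (ne_of_mem_of_not_mem hs hrS)] using h.notMem_self s hs
  · simpa using disjoint_of_subset_right hA h.disjoint_fixed
  · simpa [Function.update_of_ne (ne_of_mem_of_not_mem hs hrS)] using
      disjoint_of_subset_right hA (h.disjoint_constraint s hs)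

end Admissible

section positivity

variable {ρ b : ℝ} {ξ A S : Finset α} {U : α → Finset α} {r : α}

lemma leeYangSum_insert_le (hG : ∀ x y, 0 ≤ G x y) (hG1 : ∀ x y, x ≠ y → 1 ≤ G x y)
    (hρ : 0 ≤ ρ) (hA : ∀ ξ S U, Admissible ξ A S U → 0 ≤ leeYangSum G ρ ξ A S U)
    (h : Admissible ξ A S U) (hrA : r ∉ A) (hrS : r ∉ S) (hrU : ∀ s ∈ S, r ∉ U s) :
    leeYangSum G ρ ξ A S (fun s => insert r (U s)) ≤ leeYangSum G ρ ξ A S U := by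
  suffices ∀ T ⊆ S,
      leeYangSum G ρ ξ A S (T.piecewise (fun s => insert r (U s)) U) ≤ leeYangSum G ρ ξ A S U by
    rw [← leeYangSum_congr fun s hs => piecewise_eq_of_mem S (fun s => insert r (U s)) U hs]
    exact this S subset_rfl
  intro T
  induction T using Finset.induction_on with
  | empty => simp
  | insert t T htT ih =>
    intro hTS
    have ht : t ∈ S := hTS (mem_insert_self t T)
    have hUt : T.piecewise (fun s => insert r (U s)) U t = U t := piecewise_eq_of_notMem _ _ _ htT
    have hstep := leeYangSum_update_insert_le hG hG1 hρ ht
      (disjoint_left.mp h.disjoint_sites_fixed ht) (hUt ▸ hrU t ht)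
      (ne_of_mem_of_not_mem ht hrS).symm
      (hA _ _ _ ((h.piecewise_insert hrA hrS T).insert_fixed_erase_site ht))
    rw [hUt] at hstep
    rw [piecewise_insert]
    exact hstep.trans (ih ((subset_insert t T).trans hTS))

theorem leeYangSum_nonneg (hG : ∀ x y, 0 ≤ G x y) (hsymm : ∀ x y, G x y = G y x)
    (hG1 : ∀ x y, x ≠ y → 1 ≤ G x y) (hb : ∀ s T, s ∉ T → field G T s ≤ b)
    (hρ : 0 ≤ ρ) (hρb : ρ * b ≤ 1) (h : Admissible ξ A S U) : 0 ≤ leeYangSum G ρ ξ A S U := by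
  induction A using Finset.induction_on generalizing ξ S U with
  | empty =>
    rw [leeYangSum_empty]
    refine prod_nonneg fun s hs => ?_
    nlinarith [mul_le_mul_of_nonneg_left (hb s (U s) (h.notMem_self s hs)) hρ]
  | insert r A hr ih =>
    have hrξ : r ∉ ξ := disjoint_right.mp h.disjoint_fixed (mem_insert_self r A)
    have hrS : r ∉ S := disjoint_right.mp h.disjoint_sites (mem_insert_self r A)
    have hrU : ∀ s ∈ S, r ∉ U s := fun s hs =>
      disjoint_right.mp (h.disjoint_constraint s hs) (mem_insert_self r A)
    have hsplit := leeYangSum_eq_erase_sub (G := G) (ρ := ρ) (A := A) (U := Function.update U r ξ)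
      (mem_insert_self r S) hrξ
    have hoff : ∀ s ∈ S, Function.update U r ξ s = U s :=
      fun s hs => Function.update_of_ne (ne_of_mem_of_not_mem hs hrS) _ _
    rw [erase_insert hrS, Function.update_self, leeYangSum_congr hoff, leeYangSum_congr hoff]
      at hsplit
    have hmono := leeYangSum_insert_le hG hG1 hρ (fun _ _ _ => ih) (h.insert_fixed hr) hr hrS hrU
    have hc : 0 ≤ ρ * field G ξ r := mul_nonneg hρ (field_nonneg hG)
    rw [leeYangSum_insert hG hsymm hr hrξ hrU]
    linear_combination ih (h.insert_site hr) + mul_le_mul_of_nonneg_left hmono hc + hsplit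

end positivity

end

end LeeYang

theorem leeYang_positivity_general
    {d : ℕ} (g : (Fin d → ℤ) → ℝ)
    (hg0 : ∀ x, 0 ≤ g x) (heven : ∀ x, g (-x) = g x)
    (hg1 : ∀ x, x ≠ 0 → 1 ≤ g x)
    (b : ℝ)
    (hb : ∀ S : Finset (Fin d → ℤ), (0 : Fin d → ℤ) ∉ S → ∏ x ∈ S, g x ≤ b)
    (Λ ξ : Finset (Fin d → ℤ))
    (ρ : ℝ) (hρ0 : 0 ≤ ρ) (hρb : ρ ≤ 1 / b) :
    0 ≤ ∑ γ ∈ (Λ \ ξ).powerset,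
      (-ρ) ^ γ.card *
        (∏ y ∈ γ, ∏ x ∈ γ.erase y, Real.sqrt (g (x - y))) *
        (∏ r ∈ ξ, ∏ y ∈ γ, g (r - y)) := by
  have hb1 : 1 ≤ b := by simpa using hb ∅ (Finset.notMem_empty 0)
  have hρb_mul : ρ * b ≤ 1 := by rwa [le_div_iff₀ (by linarith)] at hρb
  have hadm : LeeYang.Admissible ξ (Λ \ ξ) ∅ fun _ => ∅ :=
    ⟨Finset.disjoint_sdiff, by simp, by simp, by simp, by simp⟩
  have h := LeeYang.leeYangSum_nonneg (G := fun x y => g (x - y)) (fun _ _ => hg0 _)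
    (fun x y => by rw [← heven, neg_sub]) (fun _ _ hxy => hg1 _ (sub_ne_zero.mpr hxy))
    (fun _ _ hs => Finset.prod_sub_le_of_prod_le hb hs) hρ0 hρb_mul hadm
  simp only [LeeYang.leeYangSum, Finset.prod_empty, mul_one] at h
  exact h

/-- Lee–Yang positivity (Theorem 5.1 of the paper, lattice version on `ℤᵈ`):
if `g ≥ 1` off the origin, `g(0) = 0`, `g` is even, and all finite products
`∏_{x ∈ S} g(x)` (with `0 ∉ S`) are bounded by `b`, then for `0 ≤ ρ ≤ 1/b`
the signed sum `Ξ(ξ)` over configurations `γ ⊆ Λ∖ξ` is nonnegative. -/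
theorem leeYang_positivity
    {d : ℕ} (g : (Fin d → ℤ) → ℝ)
    (hg0 : ∀ x, 0 ≤ g x) (heven : ∀ x, g (-x) = g x) (hzero : g 0 = 0)
    (hg1 : ∀ x, x ≠ 0 → 1 ≤ g x)
    (b : ℝ) (hb1 : 1 ≤ b)
    (hb : ∀ S : Finset (Fin d → ℤ), (0 : Fin d → ℤ) ∉ S → ∏ x ∈ S, g x ≤ b)
    (Λ ξ : Finset (Fin d → ℤ)) (hξ : ξ ⊆ Λ)
    (ρ : ℝ) (hρ0 : 0 ≤ ρ) (hρb : ρ ≤ 1 / b) :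
    0 ≤ ∑ γ ∈ (Λ \ ξ).powerset,
      (-ρ) ^ γ.card *
        (∏ y ∈ γ, ∏ x ∈ γ.erase y, Real.sqrt (g (x - y))) *
        (∏ r ∈ ξ, ∏ y ∈ γ, g (r - y)) :=
  leeYang_positivity_general g hg0 heven hg1 b hb Λ ξ ρ hρ0 hρb
end

section
/- Ruelle's zero-free lemma: let Λ be a finite set, A : Λ×Λ → ℝ symmetric with |A(x,y)| ≤ 1 for all x, y, and z : Λ → ℂ with |z_y| > 1 for all y. Then the polynomial Σ_{σ ⊂ Λ} Π_{y∈σ} ( z_y Π_{x∈Λ∖σ} A(x,y) ) is nonzero. -/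
open Finset Polynomial

section Machinery

variable {ι : Type*} [DecidableEq ι]

/-- Evaluation of a multi-affine coefficient function with "forced" set `T`. -/
noncomputable def aev (F : Finset ι → ℂ) (B T : Finset ι) (z : ι → ℂ) : ℂ :=
  ∑ S ∈ B.powerset, F (S ∪ T) * ∏ i ∈ S, z i

/-- Goodness: nonvanishing on the compactified exterior polydisk. -/
def Good (Aa : Finset ι) (F : Finset ι → ℂ) : Prop :=
  ∀ T ⊆ Aa, ∀ z : ι → ℂ, (∀ i ∈ Aa \ T, 1 < ‖z i‖) →
    aev F (Aa \ T) T z ≠ 0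

lemma Good_congr {Aa : Finset ι} {F F' : Finset ι → ℂ}
    (h : ∀ S ⊆ Aa, F S = F' S) (hG : Good Aa F) : Good Aa F' := by
  intro T hT z hzr
  have := hG T hT z hzr
  have he : aev F (Aa \ T) T z = aev F' (Aa \ T) T z := by
    refine Finset.sum_congr rfl ?_
    intro S hS
    rw [Finset.mem_powerset] at hS
    rw [h (S ∪ T) (Finset.union_subset (hS.trans (Finset.sdiff_subset)) hT)]
  rwa [he] at this

lemma sum_powerset_union' {M : Type*} [AddCommMonoid M] (B G : Finset ι) (h : Disjoint B G)
    (f : Finset ι → M) :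
    ∑ S ∈ (B ∪ G).powerset, f S = ∑ S ∈ B.powerset, ∑ R ∈ G.powerset, f (S ∪ R) := by
  classical
  induction G using Finset.induction_on generalizing f with
  | empty => simp
  | @insert g G0 hg ih =>
    have hdisj : Disjoint B G0 := h.mono_right (Finset.subset_insert _ _)
    have hgB : g ∉ B ∪ G0 := by
      intro hmem
      rcases Finset.mem_union.mp hmem with h1 | h1
      · exact Finset.disjoint_left.mp h h1 (Finset.mem_insert_self _ _)
      · exact hg h1
    have hins : B ∪ insert g G0 = insert g (B ∪ G0) := by
      ext x; simp [Finset.mem_insert, Finset.mem_union, or_left_comm, or_comm]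
    rw [hins, Finset.sum_powerset_insert hgB, ih hdisj f,
      ih hdisj (fun S => f (insert g S))]
    have h2 : ∀ S ∈ B.powerset, ∑ R ∈ (insert g G0).powerset, f (S ∪ R)
        = ∑ R ∈ G0.powerset, f (S ∪ R) + ∑ R ∈ G0.powerset, f (S ∪ insert g R) := by
      intro S _
      rw [Finset.sum_powerset_insert hg]
    rw [Finset.sum_congr rfl h2, Finset.sum_add_distrib]
    congr 1
    refine Finset.sum_congr rfl fun S hS => Finset.sum_congr rfl fun R hR => ?_
    congr 1
    ext x; simp [Finset.mem_insert, Finset.mem_union, or_left_comm, or_comm]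

lemma pair_ne (a : ℝ) (ha : |a| ≤ 1) (u v : ℂ) (hu : 1 < ‖u‖)
    (hv : 1 < ‖v‖) : 1 + a * v + (a * u + u * v) ≠ 0 := by
  intro h
  have hav : (a : ℂ) + v ≠ 0 := by
    intro h0
    have hveq : v = -(a : ℂ) := by linear_combination h0
    have : ‖v‖ = |a| := by rw [hveq]; simp [Complex.norm_real]
    rw [this] at hv; linarith
  have hv2 : 1 < v.re ^ 2 + v.im ^ 2 := by
    have h1 := Complex.sq_norm v
    have h2 : Complex.normSq v = v.re * v.re + v.im * v.im := Complex.normSq_apply v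
    nlinarith [hv, norm_nonneg v]
  have key : ‖1 + a * v‖ ≤ ‖((a : ℂ) + v)‖ := by
    have h1 : (‖1 + a * v‖) ^ 2 = (1 + a * v.re) ^ 2 + (a * v.im) ^ 2 := by
      rw [Complex.sq_norm, Complex.normSq_apply]
      simp [Complex.add_re, Complex.add_im, Complex.mul_re, Complex.mul_im]
      ring
    have h2 : (‖((a : ℂ) + v)‖) ^ 2 = (a + v.re) ^ 2 + v.im ^ 2 := by
      rw [Complex.sq_norm, Complex.normSq_apply]
      simp [Complex.add_re, Complex.add_im]
      ring
    have ha2 : a ^ 2 ≤ 1 := by nlinarith [abs_nonneg a, sq_abs a]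
    have hsq : (‖1 + a * v‖) ^ 2 ≤ (‖((a : ℂ) + v)‖) ^ 2 := by
      rw [h1, h2]; nlinarith
    nlinarith [norm_nonneg (1 + a * v), norm_nonneg ((a : ℂ) + v), hsq]
  have heq : u * ((a : ℂ) + v) = -(1 + a * v) := by linear_combination h
  have habs : ‖u‖ * ‖((a : ℂ) + v)‖ = ‖1 + a * v‖ := by
    rw [← norm_mul, heq, norm_neg]
  have hpos : 0 < ‖((a : ℂ) + v)‖ := by
    simpa [norm_pos_iff] using hav
  nlinarith [habs, key, hu, hpos]

lemma sum_powerset_single {M : Type*} [AddCommMonoid M] (j : ι) (f : Finset ι → M) :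
    ∑ S ∈ ({j} : Finset ι).powerset, f S = f ∅ + f {j} := by
  rw [show ({j} : Finset ι) = insert j ∅ from rfl,
    Finset.sum_powerset_insert (Finset.notMem_empty j), Finset.powerset_empty]
  simp

lemma sum_powerset_pair {M : Type*} [AddCommMonoid M] {i j : ι} (hij : i ≠ j)
    (f : Finset ι → M) :
    ∑ S ∈ ({i, j} : Finset ι).powerset, f S = f ∅ + f {j} + (f {i} + f {i, j}) := by
  rw [show ({i, j} : Finset ι) = insert i {j} from rfl,
    Finset.sum_powerset_insert (by simp [hij] : i ∉ ({j} : Finset ι)),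
    sum_powerset_single, sum_powerset_single]
  rfl

lemma pair_good (i j : ι) (hij : i ≠ j) (a : ℝ) (ha : |a| ≤ 1) :
    Good {i, j} (fun S => if i ∈ S then (if j ∈ S then (1:ℂ) else (a:ℂ))
      else (if j ∈ S then (a:ℂ) else 1)) := by
  have habs : ‖((a : ℂ))‖ = |a| := (by rw [Complex.norm_real, Real.norm_eq_abs])
  intro T hT z hzr
  by_cases hi : i ∈ T <;> by_cases hj : j ∈ T
  · -- T = {i,j}
    have hTe : T = {i, j} := Finset.Subset.antisymm hT (by
      intro x hx; rcases Finset.mem_insert.mp hx with h | h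
      · exact h ▸ hi
      · exact (Finset.mem_singleton.mp h) ▸ hj)
    subst hTe
    simp [aev]
  · -- T = {i}
    have hTe : T = {i} := by
      apply Finset.Subset.antisymm
      · intro x hx
        rcases Finset.mem_insert.mp (hT hx) with h | h
        · exact h ▸ Finset.mem_singleton_self i
        · exact absurd ((Finset.mem_singleton.mp h) ▸ hx) hj
      · intro x hx; exact (Finset.mem_singleton.mp hx) ▸ hi
    subst hTe
    have hB : ({i, j} : Finset ι) \ {i} = {j} := by
      ext x
      simp only [Finset.mem_sdiff, Finset.mem_insert, Finset.mem_singleton]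
      constructor
      · rintro ⟨h1 | h1, h2⟩
        · exact absurd h1 h2
        · exact h1
      · rintro rfl; exact ⟨Or.inr rfl, fun h => hij h.symm⟩
    rw [hB]
    have hzj : 1 < ‖z j‖ := by
      apply hzr; rw [hB]; exact Finset.mem_singleton_self j
    rw [aev, sum_powerset_single]
    simp only [Finset.empty_union, Finset.mem_singleton, Finset.mem_union, Finset.mem_insert,
      Finset.prod_empty, Finset.prod_singleton]
    rw [if_pos (by simp), if_neg (by simp [hij, Ne.symm hij]),
      if_pos (by simp), if_pos (by simp)]
    intro h
    have hzeq : z j = -(a : ℂ) := by linear_combination h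
    rw [hzeq] at hzj
    simp [habs] at hzj
    linarith
  · -- T = {j}
    have hTe : T = {j} := by
      apply Finset.Subset.antisymm
      · intro x hx
        rcases Finset.mem_insert.mp (hT hx) with h | h
        · exact absurd (h ▸ hx) hi
        · exact (Finset.mem_singleton.mp h) ▸ Finset.mem_singleton_self j
      · intro x hx; exact (Finset.mem_singleton.mp hx) ▸ hj
    subst hTe
    have hB : ({i, j} : Finset ι) \ {j} = {i} := by
      ext x
      simp only [Finset.mem_sdiff, Finset.mem_insert, Finset.mem_singleton]
      constructor
      · rintro ⟨h1 | h1, h2⟩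
        · exact h1
        · exact absurd h1 h2
      · rintro rfl; exact ⟨Or.inl rfl, hij⟩
    rw [hB]
    have hzi : 1 < ‖z i‖ := by
      apply hzr; rw [hB]; exact Finset.mem_singleton_self i
    rw [aev, sum_powerset_single]
    simp only [Finset.empty_union, Finset.mem_singleton, Finset.mem_union, Finset.mem_insert,
      Finset.prod_empty, Finset.prod_singleton]
    rw [if_neg (by simp [hij]), if_pos (by simp), if_pos (by simp), if_pos (by simp)]
    intro h
    have hzeq : z i = -(a : ℂ) := by linear_combination h
    rw [hzeq] at hzi
    simp [habs] at hzi
    linarith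
  · -- T = ∅
    have hTe : T = ∅ := by
      apply Finset.eq_empty_of_forall_notMem
      intro x hx
      rcases Finset.mem_insert.mp (hT hx) with h | h
      · exact hi (h ▸ hx)
      · exact hj ((Finset.mem_singleton.mp h) ▸ hx)
    subst hTe
    rw [Finset.sdiff_empty] at hzr ⊢
    have hzi : 1 < ‖z i‖ := hzr i (by simp)
    have hzj : 1 < ‖z j‖ := hzr j (by simp)
    rw [aev, sum_powerset_pair hij]
    simp only [Finset.union_empty, Finset.mem_singleton, Finset.mem_insert,
      Finset.prod_empty, Finset.prod_singleton, Finset.notMem_empty, if_false,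
      Finset.prod_pair hij]
    simp only [hij, Ne.symm hij, if_true, if_false, eq_self_iff_true, or_true, true_or,
      or_false, false_or, if_neg hij, if_neg (Ne.symm hij)]
    have := pair_ne a ha (z i) (z j) hzi hzj
    intro h
    apply this
    linear_combination h

lemma prod_good {Aa Bb : Finset ι} {F G H : Finset ι → ℂ}
    (hF : Good Aa F) (hG : Good Bb G) (hd : Disjoint Aa Bb)
    (hH : ∀ S, H S = F (S ∩ Aa) * G (S ∩ Bb)) : Good (Aa ∪ Bb) H := by
  intro T hT z hzr
  have hdBT : Disjoint (Aa \ T) (Bb \ T) :=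
    (hd.mono (Finset.sdiff_subset) (Finset.sdiff_subset))
  have hsplit : (Aa ∪ Bb) \ T = (Aa \ T) ∪ (Bb \ T) := Finset.union_sdiff_distrib Aa Bb T
  have key : aev H ((Aa ∪ Bb) \ T) T z
      = aev F (Aa \ (T ∩ Aa)) (T ∩ Aa) z * aev G (Bb \ (T ∩ Bb)) (T ∩ Bb) z := by
    rw [aev, hsplit, sum_powerset_union' _ _ hdBT]
    have hterm : ∀ S ∈ (Aa \ T).powerset, ∀ R ∈ (Bb \ T).powerset,
        H (S ∪ R ∪ T) * ∏ i ∈ S ∪ R, z i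
        = (F (S ∪ T ∩ Aa) * ∏ i ∈ S, z i) * (G (R ∪ T ∩ Bb) * ∏ i ∈ R, z i) := by
      intro S hS R hR
      rw [Finset.mem_powerset] at hS hR
      have hSA : S ⊆ Aa := hS.trans Finset.sdiff_subset
      have hRB : R ⊆ Bb := hR.trans Finset.sdiff_subset
      have hSR : Disjoint S R := hdBT.mono hS hR
      have h1 : (S ∪ R ∪ T) ∩ Aa = S ∪ T ∩ Aa := by
        ext x
        simp only [Finset.mem_inter, Finset.mem_union]
        constructor
        · rintro ⟨h2 | h2, h3⟩
          · rcases h2 with h4 | h4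
            · exact Or.inl h4
            · exact absurd h3 (Finset.disjoint_right.mp hd (hRB h4))
          · exact Or.inr ⟨h2, h3⟩
        · rintro (h2 | ⟨h2, h3⟩)
          · exact ⟨Or.inl (Or.inl h2), hSA h2⟩
          · exact ⟨Or.inr h2, h3⟩
      have h2 : (S ∪ R ∪ T) ∩ Bb = R ∪ T ∩ Bb := by
        ext x
        simp only [Finset.mem_inter, Finset.mem_union]
        constructor
        · rintro ⟨h2 | h2, h3⟩
          · rcases h2 with h4 | h4
            · exact absurd h3 (Finset.disjoint_left.mp hd (hSA h4))
            · exact Or.inl h4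
          · exact Or.inr ⟨h2, h3⟩
        · rintro (h2 | ⟨h2, h3⟩)
          · exact ⟨Or.inl (Or.inr h2), hRB h2⟩
          · exact ⟨Or.inr h2, h3⟩
      rw [hH, h1, h2, Finset.prod_union hSR]
      ring
    rw [Finset.sum_congr rfl (fun S hS => Finset.sum_congr rfl (hterm S hS))]
    rw [← Finset.sum_mul_sum]
    congr 1 <;> rw [aev] <;> congr 1 <;> ext x <;>
      simp [Finset.mem_sdiff, Finset.mem_inter] <;> tauto
  rw [key]
  apply mul_ne_zero
  · apply hF (T ∩ Aa) Finset.inter_subset_right z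
    intro x hx
    apply hzr
    rw [hsplit]
    rw [Finset.mem_sdiff, Finset.mem_inter] at hx
    exact Finset.mem_union_left _ (Finset.mem_sdiff.mpr ⟨hx.1, fun hxt => hx.2 ⟨hxt, hx.1⟩⟩)
  · apply hG (T ∩ Bb) Finset.inter_subset_right z
    intro x hx
    apply hzr
    rw [hsplit]
    rw [Finset.mem_sdiff, Finset.mem_inter] at hx
    exact Finset.mem_union_right _ (Finset.mem_sdiff.mpr ⟨hx.1, fun hxt => hx.2 ⟨hxt, hx.1⟩⟩)

lemma multiset_abs_prod_le_one (m : Multiset ℂ) (h : ∀ x ∈ m, ‖x‖ ≤ 1) :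
    ‖m.prod‖ ≤ 1 := by
  induction m using Multiset.induction_on with
  | empty => simp
  | cons a s ih =>
    rw [Multiset.prod_cons, norm_mul]
    have h1 : ‖a‖ ≤ 1 := h a (Multiset.mem_cons_self a s)
    have h2 : ‖s.prod‖ ≤ 1 := ih (fun x hx => h x (Multiset.mem_cons_of_mem hx))
    calc ‖a‖ * ‖s.prod‖ ≤ 1 * 1 :=
      mul_le_mul h1 h2 (norm_nonneg _) zero_le_one
    _ = 1 := mul_one 1

/-- If a polynomial of exact degree `k ≥ 0` (given via explicit coefficients, with
leading coefficient nonzero) has no zeros of modulus `> 1`, then its constant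
coefficient is at most the leading one in modulus. -/
lemma key_poly (k : ℕ) (c : ℕ → ℂ) (hd : c k ≠ 0)
    (hnv : ∀ u : ℂ, 1 < ‖u‖ → (∑ r ∈ Finset.range (k + 1), c r * u ^ r) ≠ 0) :
    ‖c 0‖ ≤ ‖c k‖ := by
  rcases Nat.eq_zero_or_pos k with rfl | hk
  · simp
  set p : Polynomial ℂ := ∑ r ∈ Finset.range (k + 1), Polynomial.C (c r) * Polynomial.X ^ r
    with hp
  have hcoeff : ∀ n, p.coeff n = if n ≤ k then c n else 0 := by
    intro n
    rw [hp, Polynomial.finset_sum_coeff]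
    simp only [Polynomial.coeff_C_mul, Polynomial.coeff_X_pow]
    by_cases hn : n ≤ k
    · rw [Finset.sum_eq_single n]
      · simp [hn]
      · intro b _ hbn; simp [Ne.symm hbn]
      · intro hmem; exact absurd (Finset.mem_range.mpr (Nat.lt_succ_of_le hn)) hmem
    · rw [if_neg hn]
      apply Finset.sum_eq_zero
      intro b hb
      rw [Finset.mem_range] at hb
      have hbn : n ≠ b := by omega
      simp [hbn]
  have heval : ∀ u : ℂ, p.eval u = ∑ r ∈ Finset.range (k + 1), c r * u ^ r := by
    intro u
    rw [hp, Polynomial.eval_finset_sum]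
    simp
  have hpk : p.coeff k = c k := by rw [hcoeff]; simp
  have hp0 : p.coeff 0 = c 0 := by rw [hcoeff]; simp
  have hpne : p ≠ 0 := fun h => hd (by rw [← hpk, h, Polynomial.coeff_zero])
  have hdegle : p.natDegree ≤ k := by
    apply Polynomial.natDegree_le_iff_coeff_eq_zero.mpr
    intro n hn
    rw [hcoeff, if_neg (by omega)]
  have hdeg : p.natDegree = k :=
    le_antisymm hdegle (Polynomial.le_natDegree_of_ne_zero (by rw [hpk]; exact hd))
  have hlead : p.leadingCoeff = c k := by rw [Polynomial.leadingCoeff, hdeg, hpk]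
  have hsplits : p.Splits := IsAlgClosed.splits p
  have hfact := hsplits.eq_prod_roots
  have hroots_le : ∀ x ∈ p.roots, ‖x‖ ≤ 1 := by
    intro x hx
    by_contra hgt
    push_neg at hgt
    have : p.eval x = 0 := (Polynomial.isRoot_of_mem_roots hx)
    rw [heval] at this
    exact hnv x hgt this
  have heval0 : p.eval 0 = c 0 := by
    rw [heval]
    rw [Finset.sum_eq_single 0]
    · simp
    · intro b _ hb; simp [hb, zero_pow]
    · intro h; exact absurd (Finset.mem_range.mpr (by omega)) h
  have habs : ‖c 0‖
      = ‖c k‖ * ‖(p.roots.map (fun a => -a)).prod‖ := by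
    have : p.eval 0 = p.leadingCoeff * (p.roots.map (fun a => -a)).prod := by
      conv_lhs => rw [hfact]
      rw [Polynomial.eval_mul, Polynomial.eval_C, Polynomial.eval_multiset_prod]
      congr 1
      rw [Multiset.map_map]
      congr 1
      ext a
      simp
    rw [← heval0, this, hlead, norm_mul]
  rw [habs]
  have : ‖(p.roots.map (fun a => -a)).prod‖ ≤ 1 := by
    apply multiset_abs_prod_le_one
    intro x hx
    rw [Multiset.mem_map] at hx
    obtain ⟨a, ha, rfl⟩ := hx
    rw [norm_neg]
    exact hroots_le a ha
  calc ‖c k‖ * ‖(p.roots.map (fun a => -a)).prod‖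
      ≤ ‖c k‖ * 1 := by
        apply mul_le_mul_of_nonneg_left this (norm_nonneg _)
  _ = ‖c k‖ := mul_one _

lemma contract_good {Aa G : Finset ι} {g : ι} {F : Finset ι → ℂ}
    (hF : Good Aa F) (hG : G ⊆ Aa) (hg : g ∉ Aa) :
    Good ((Aa \ G) ∪ {g}) (fun S => if g ∈ S then F ((S.erase g) ∪ G) else F S) := by
  intro T' hT' z hzr
  by_cases hgT : g ∈ T'
  · -- `g` is forced: pure reindexing
    set T : Finset ι := (T'.erase g) ∪ G with hTdef
    have hTA : T ⊆ Aa := by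
      apply Finset.union_subset _ hG
      intro x hx
      rw [Finset.mem_erase] at hx
      rcases Finset.mem_union.mp (hT' hx.2) with h | h
      · exact (Finset.mem_sdiff.mp h).1
      · exact absurd (Finset.mem_singleton.mp h) hx.1
    have hAT : ((Aa \ G) ∪ {g}) \ T' = Aa \ T := by
      ext x
      simp only [Finset.mem_sdiff, Finset.mem_union, Finset.mem_singleton, Finset.mem_erase,
        hTdef]
      constructor
      · rintro ⟨h1 | rfl, h2⟩
        · exact ⟨h1.1, fun h3 => h3.elim (fun h4 => h2 h4.2) h1.2⟩
        · exact absurd hgT h2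
      · rintro ⟨h1, h2⟩
        have hxg : x ≠ g := fun h => hg (h ▸ h1)
        exact ⟨Or.inl ⟨h1, fun h3 => h2 (Or.inr h3)⟩, fun h3 => h2 (Or.inl ⟨hxg, h3⟩)⟩
    have hkey : aev (fun S => if g ∈ S then F ((S.erase g) ∪ G) else F S)
        ((((Aa \ G) ∪ {g})) \ T') T' z = aev F (Aa \ T) T z := by
      rw [hAT, aev, aev]
      refine Finset.sum_congr rfl fun S hS => ?_
      rw [Finset.mem_powerset] at hS
      have hgS : g ∉ S := fun h => hg ((Finset.mem_sdiff.mp (hS h)).1)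
      have hgST : g ∈ S ∪ T' := Finset.mem_union_right _ hgT
      rw [if_pos hgST]
      congr 2
      rw [Finset.erase_union_distrib, Finset.erase_eq_of_notMem hgS, Finset.union_assoc]
    rw [hkey]
    apply hF T hTA z
    intro i hi
    apply hzr
    rw [hAT]; exact hi
  · -- `g` is a live variable
    have hT'sub : T' ⊆ Aa \ G := by
      intro x hx
      rcases Finset.mem_union.mp (hT' hx) with h | h
      · exact h
      · exact absurd ((Finset.mem_singleton.mp h) ▸ hx) hgT
    set B : Finset ι := (Aa \ G) \ T' with hBdef
    have hgB : g ∉ B := fun h => hg (Finset.mem_sdiff.mp (Finset.mem_sdiff.mp h).1).1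
    have hAT : ((Aa \ G) ∪ {g}) \ T' = insert g B := by
      ext x
      simp only [Finset.mem_sdiff, Finset.mem_union, Finset.mem_singleton, Finset.mem_insert,
        hBdef]
      constructor
      · rintro ⟨h1 | h1, h2⟩
        · exact Or.inr ⟨h1, h2⟩
        · exact Or.inl h1
      · rintro (rfl | ⟨h1, h2⟩)
        · exact ⟨Or.inr rfl, hgT⟩
        · exact ⟨Or.inl h1, h2⟩
    have hBG : Disjoint B G := by
      rw [Finset.disjoint_left]
      intro x hx
      exact (Finset.mem_sdiff.mp (Finset.mem_sdiff.mp hx).1).2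
    have hT'G : Disjoint T' G := by
      rw [Finset.disjoint_left]
      intro x hx
      exact (Finset.mem_sdiff.mp (hT'sub hx)).2
    have hBfull : Aa \ (T' ∪ G) = B := by
      ext x
      simp only [Finset.mem_sdiff, Finset.mem_union, hBdef]
      tauto
    have hBGfull : Aa \ T' = B ∪ G := by
      ext x
      simp only [Finset.mem_sdiff, Finset.mem_union, hBdef]
      constructor
      · rintro ⟨h1, h2⟩
        by_cases hxG : x ∈ G
        · exact Or.inr hxG
        · exact Or.inl ⟨⟨h1, hxG⟩, h2⟩
      · rintro (⟨⟨h1, _⟩, h2⟩ | h1)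
        · exact ⟨h1, h2⟩
        · exact ⟨hG h1, Finset.disjoint_right.mp hT'G h1⟩
    set a : ℂ := aev F B T' z with hadef
    set d : ℂ := aev F B (T' ∪ G) z with hddef
    have hzB : ∀ i ∈ B, 1 < ‖z i‖ := by
      intro i hi
      apply hzr
      rw [hAT]
      exact Finset.mem_insert_of_mem hi
    have hd : d ≠ 0 := by
      have := hF (T' ∪ G) (Finset.union_subset (hT'sub.trans Finset.sdiff_subset) hG) z
        (by rw [hBfull]; exact hzB)
      rwa [hBfull] at this
    have hzg : 1 < ‖z g‖ := by
      apply hzr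
      rw [hAT]
      exact Finset.mem_insert_self g B
    have hsum : aev (fun S => if g ∈ S then F ((S.erase g) ∪ G) else F S)
        ((((Aa \ G) ∪ {g})) \ T') T' z = a + z g * d := by
      rw [hAT, aev, Finset.sum_powerset_insert hgB]
      congr 1
      · rw [hadef, aev]
        refine Finset.sum_congr rfl fun S hS => ?_
        rw [Finset.mem_powerset] at hS
        have : g ∉ S ∪ T' := by
          rw [Finset.mem_union]
          rintro (h | h)
          · exact hgB (hS h)
          · exact hgT h
        rw [if_neg this]
      · rw [hddef, aev, Finset.mul_sum]
        refine Finset.sum_congr rfl fun S hS => ?_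
        rw [Finset.mem_powerset] at hS
        have hgS : g ∉ S := fun h => hgB (hS h)
        have hmem : g ∈ insert g S ∪ T' := Finset.mem_union_left _ (Finset.mem_insert_self _ _)
        rw [if_pos hmem]
        have herase : ((insert g S ∪ T').erase g) ∪ G = S ∪ (T' ∪ G) := by
          rw [Finset.erase_union_distrib, Finset.erase_insert hgS,
            Finset.erase_eq_of_notMem hgT, Finset.union_assoc]
        rw [herase, Finset.prod_insert hgS]
        ring
    rw [hsum]
    -- now show |a| ≤ |d|
    have hab : ‖a‖ ≤ ‖d‖ := by
      rcases Finset.eq_empty_or_nonempty G with rfl | hGne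
      · rw [hadef, hddef, Finset.union_empty]
      · have hk : 0 < G.card := Finset.card_pos.mpr hGne
        have hc0 : (∑ R ∈ G.powerset.filter (fun R => R.card = 0),
            ∑ S ∈ B.powerset, F (S ∪ R ∪ T') * ∏ i ∈ S, z i) = a := by
          have hfe : G.powerset.filter (fun R => R.card = 0) = {∅} := by
            ext R
            simp only [Finset.mem_filter, Finset.mem_powerset, Finset.mem_singleton,
              Finset.card_eq_zero]
            exact ⟨fun h => h.2, fun h => ⟨h ▸ Finset.empty_subset G, h⟩⟩
          rw [hfe, Finset.sum_singleton, hadef, aev]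
          refine Finset.sum_congr rfl fun S hS => ?_
          rw [Finset.union_empty]
        have hck : (∑ R ∈ G.powerset.filter (fun R => R.card = G.card),
            ∑ S ∈ B.powerset, F (S ∪ R ∪ T') * ∏ i ∈ S, z i) = d := by
          have hfe : G.powerset.filter (fun R => R.card = G.card) = {G} := by
            ext R
            simp only [Finset.mem_filter, Finset.mem_powerset, Finset.mem_singleton]
            constructor
            · rintro ⟨h1, h2⟩
              exact Finset.eq_of_subset_of_card_le h1 (le_of_eq h2.symm)
            · rintro rfl
              exact ⟨Finset.Subset.refl _, rfl⟩
          rw [hfe, Finset.sum_singleton, hddef, aev]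
          refine Finset.sum_congr rfl fun S hS => ?_
          congr 2
          rw [Finset.union_assoc, Finset.union_comm G T']
        set c : ℕ → ℂ := fun r => ∑ R ∈ G.powerset.filter (fun R => R.card = r),
          ∑ S ∈ B.powerset, F (S ∪ R ∪ T') * ∏ i ∈ S, z i with hcdef
        have hnv : ∀ u : ℂ, 1 < ‖u‖ →
            (∑ r ∈ Finset.range (G.card + 1), c r * u ^ r) ≠ 0 := by
          intro u hu
          set z' : ι → ℂ := fun i => if i ∈ G then u else z i with hz'def
          have heq : (∑ r ∈ Finset.range (G.card + 1), c r * u ^ r)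
              = aev F (Aa \ T') T' z' := by
            have step1 : (∑ r ∈ Finset.range (G.card + 1), c r * u ^ r)
                = ∑ r ∈ Finset.range (G.card + 1), ∑ R ∈ G.powerset.filter (fun R => R.card = r),
                    ((∑ S ∈ B.powerset, F (S ∪ R ∪ T') * ∏ i ∈ S, z i) * u ^ R.card) := by
              refine Finset.sum_congr rfl fun r _ => ?_
              rw [hcdef]
              rw [Finset.sum_mul]
              refine Finset.sum_congr rfl fun R hR => ?_
              rw [(Finset.mem_filter.mp hR).2]
            have step2 : (∑ r ∈ Finset.range (G.card + 1), ∑ R ∈ G.powerset.filter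
                  (fun R => R.card = r),
                    ((∑ S ∈ B.powerset, F (S ∪ R ∪ T') * ∏ i ∈ S, z i) * u ^ R.card))
                = ∑ R ∈ G.powerset,
                    ((∑ S ∈ B.powerset, F (S ∪ R ∪ T') * ∏ i ∈ S, z i) * u ^ R.card) := by
              exact Finset.sum_fiberwise_of_maps_to
                (fun R hR => Finset.mem_range.mpr (Nat.lt_succ_of_le
                  (Finset.card_le_card (Finset.mem_powerset.mp hR)))) _
            rw [step1, step2, aev, hBGfull, sum_powerset_union' _ _ hBG, Finset.sum_comm]
            refine Finset.sum_congr rfl fun R hR => ?_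
            rw [Finset.mem_powerset] at hR
            rw [Finset.sum_mul]
            refine Finset.sum_congr rfl fun S hS => ?_
            rw [Finset.mem_powerset] at hS
            have hSR : Disjoint S R := hBG.mono hS hR
            rw [Finset.prod_union hSR]
            have hz1 : (∏ i ∈ S, z' i) = ∏ i ∈ S, z i := by
              refine Finset.prod_congr rfl fun i hi => ?_
              rw [hz'def]
              exact if_neg (Finset.disjoint_left.mp hBG (hS hi))
            have hz2 : (∏ i ∈ R, z' i) = u ^ R.card := by
              rw [hz'def]
              rw [Finset.prod_congr rfl (fun i hi => if_pos (hR hi))]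
              exact Finset.prod_const u
            rw [hz1, hz2]
            ring
          rw [heq]
          apply hF T' (hT'sub.trans Finset.sdiff_subset) z'
          intro i hi
          rw [hBGfull] at hi
          rcases Finset.mem_union.mp hi with h | h
          · rw [hz'def]
            simp only [if_neg (Finset.disjoint_left.mp hBG h)]
            exact hzB i h
          · rw [hz'def]
            simp only [if_pos h]
            exact hu
        have := key_poly G.card c (by rw [hcdef]; simpa only [] using hck ▸ hd) hnv
        rw [hcdef] at this
        simp only [] at this
        calc ‖a‖ = ‖c 0‖ := by rw [hcdef]; simp only []; rw [hc0]
        _ ≤ ‖c G.card‖ := key_poly G.card c (by rw [hcdef]; simp only []; rw [hck]; exact hd) hnv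
        _ = ‖d‖ := by rw [hcdef]; simp only []; rw [hck]
    intro hzero
    have h1 : ‖a‖ = ‖z g‖ * ‖d‖ := by
      have : a = -(z g * d) := by linear_combination hzero
      rw [this, norm_neg, norm_mul]
    have h2 : ‖d‖ ≠ 0 := fun h => hd (norm_eq_zero.mp h)
    have h3 : 0 < ‖d‖ := lt_of_le_of_ne (norm_nonneg d) (Ne.symm h2)
    nlinarith [hab, h1, hzg, h3]

end Machinery

section Assembly

variable {Λ : Type*} [Fintype Λ] [DecidableEq Λ]

/-- Coefficient function of one pair factor. -/
def phi (A : Λ → Λ → ℝ) (q : Λ × Λ) (S : Finset (Λ × Λ)) : ℂ :=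
  if q ∈ S then (if q.swap ∈ S then (1:ℂ) else (A q.1 q.2 : ℂ))
  else (if q.swap ∈ S then (A q.1 q.2 : ℂ) else 1)

/-- Coefficient function of a product of pair factors. -/
def FP (A : Λ → Λ → ℝ) (P : Finset (Λ × Λ)) (S : Finset (Λ × Λ)) : ℂ :=
  ∏ q ∈ P, phi A q S

lemma phi_congr (A : Λ → Λ → ℝ) (q : Λ × Λ) {S S' : Finset (Λ × Λ)}
    (h1 : q ∈ S ↔ q ∈ S') (h2 : q.swap ∈ S ↔ q.swap ∈ S') : phi A q S = phi A q S' := by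
  unfold phi
  by_cases hq : q ∈ S <;> by_cases hs : q.swap ∈ S <;>
    simp [hq, hs, h1.mp, h2.mp, (not_iff_not.mpr h1).mp, (not_iff_not.mpr h2).mp] <;>
    simp [h1.not.mp hq, h2.not.mp hs, h1.mp hq, h2.mp hs]

lemma FP_good (A : Λ → Λ → ℝ) (hA : ∀ x y, |A x y| ≤ 1) (P : Finset (Λ × Λ))
    (hod : ∀ q ∈ P, q.1 ≠ q.2) (hanti : ∀ q ∈ P, q.swap ∉ P) :
    Good (P ∪ P.image Prod.swap) (FP A P) := by
  classical
  induction P using Finset.induction_on with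
  | empty =>
    intro T hT z hzr
    have hTe : T = ∅ := Finset.subset_empty.mp (by simpa using hT)
    subst hTe
    simp [aev, FP]
  | @insert q P hq ih =>
    have hqd : q.1 ≠ q.2 := hod q (Finset.mem_insert_self q P)
    have hqs : q ≠ q.swap := fun h => hqd (congrArg Prod.fst h ▸ (by
      rw [h]; rfl))
    have hswapq : q.swap ∉ insert q P := hanti q (Finset.mem_insert_self q P)
    have hswapP : q.swap ∉ P := fun h => hswapq (Finset.mem_insert_of_mem h)
    have hqP' : q ∉ P.image Prod.swap := by
      intro h
      obtain ⟨r, hr, hrq⟩ := Finset.mem_image.mp h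
      have : r = q.swap := by
        rw [← hrq]; ext <;> rfl
      exact hswapP (this ▸ hr)
    have hqsP' : q.swap ∉ P.image Prod.swap := by
      intro h
      obtain ⟨r, hr, hrq⟩ := Finset.mem_image.mp h
      have : r = q := by
        have := congrArg Prod.swap hrq
        simpa using this
      exact hq (this ▸ hr)
    have hdisj : Disjoint ({q, q.swap} : Finset (Λ × Λ)) (P ∪ P.image Prod.swap) := by
      rw [Finset.disjoint_left]
      intro x hx
      rcases Finset.mem_insert.mp hx with rfl | hx
      · intro h
        rcases Finset.mem_union.mp h with h | h
        · exact hq h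
        · exact hqP' h
      · rw [Finset.mem_singleton] at hx
        subst hx
        intro h
        rcases Finset.mem_union.mp h with h | h
        · exact hswapP h
        · exact hqsP' h
    have ihg : Good (P ∪ P.image Prod.swap) (FP A P) :=
      ih (fun r hr => hod r (Finset.mem_insert_of_mem hr))
        (fun r hr h => hanti r (Finset.mem_insert_of_mem hr) (Finset.mem_insert_of_mem h))
    have hpair := pair_good q q.swap hqs (A q.1 q.2) (hA _ _)
    have hprod := prod_good hpair ihg hdisj (H := FP A (insert q P)) ?_
    · have hset : ({q, q.swap} : Finset (Λ × Λ)) ∪ (P ∪ P.image Prod.swap)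
          = insert q P ∪ (insert q P).image Prod.swap := by
        ext x
        simp only [Finset.mem_union, Finset.mem_insert, Finset.mem_singleton, Finset.mem_image]
        constructor
        · rintro ((rfl | rfl) | (h | ⟨r, hr, rfl⟩))
          · exact Or.inl (Or.inl rfl)
          · exact Or.inr ⟨q, Or.inl rfl, rfl⟩
          · exact Or.inl (Or.inr h)
          · exact Or.inr ⟨r, Or.inr hr, rfl⟩
        · rintro ((rfl | h) | ⟨r, (rfl | hr), rfl⟩)
          · exact Or.inl (Or.inl rfl)
          · exact Or.inr (Or.inl h)
          · exact Or.inl (Or.inr rfl)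
          · exact Or.inr (Or.inr ⟨r, hr, rfl⟩)
      rwa [hset] at hprod
    · intro S
      rw [FP, Finset.prod_insert hq]
      congr 1
      · exact phi_congr A q (by simp) (by simp)
      · rw [FP]
        refine Finset.prod_congr rfl fun r hr => ?_
        apply phi_congr
        · have : r ∈ P ∪ P.image Prod.swap := Finset.mem_union_left _ hr
          simp [Finset.mem_inter, this]
        · have : r.swap ∈ P ∪ P.image Prod.swap :=
            Finset.mem_union_right _ (Finset.mem_image.mpr ⟨r, hr, rfl⟩)
          simp [Finset.mem_inter, this]

variable (A : Λ → Λ → ℝ)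

/-- ordered-pair representatives -/
def Pfull (e : Λ ≃ Fin (Fintype.card Λ)) : Finset (Λ × Λ) :=
  Finset.univ.filter (fun q => e q.1 < e q.2)

/-- active variables after contracting the sites in `C` -/
def actCd (C : Finset Λ) : Finset (Λ × Λ) :=
  Finset.univ.filter (fun q => (q.1 ≠ q.2 ∧ q.2 ∉ C) ∨ (q.1 = q.2 ∧ q.1 ∈ C))

/-- the group of variables contracted into the site `s` -/
def grp (s : Λ) : Finset (Λ × Λ) :=
  Finset.univ.filter (fun q => q.2 = s ∧ q.1 ≠ s)

/-- unfolding a set of merged variables into the original variables -/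
def unf (C : Finset Λ) (S : Finset (Λ × Λ)) : Finset (Λ × Λ) :=
  S.filter (fun q => q.1 ≠ q.2)
    ∪ Finset.univ.filter (fun q => q.1 ≠ q.2 ∧ q.2 ∈ C ∧ (q.2, q.2) ∈ S)

lemma contract_all (hA : ∀ x y, |A x y| ≤ 1) (e : Λ ≃ Fin (Fintype.card Λ)) (C : Finset Λ) :
    Good (actCd C) (fun S => FP A (Pfull e) (unf C S)) := by
  classical
  induction C using Finset.induction_on with
  | empty =>
    have hod : ∀ q ∈ Pfull e, q.1 ≠ q.2 := by
      intro q hq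
      rw [Pfull, Finset.mem_filter] at hq
      intro h
      exact absurd hq.2 (by rw [h]; exact lt_irrefl _)
    have hanti : ∀ q ∈ Pfull e, q.swap ∉ Pfull e := by
      intro q hq h
      rw [Pfull, Finset.mem_filter] at hq h
      exact absurd hq.2 (not_lt.mpr (le_of_lt h.2))
    have hbase := FP_good A hA (Pfull e) hod hanti
    have hset : Pfull e ∪ (Pfull e).image Prod.swap = actCd (∅ : Finset Λ) := by
      ext q
      simp only [Pfull, actCd, Finset.mem_union, Finset.mem_filter, Finset.mem_univ,
        true_and, Finset.mem_image, Finset.notMem_empty, not_false_iff, and_true,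
        and_false, or_false]
      constructor
      · rintro (h | ⟨r, hr, rfl⟩)
        · intro heq; rw [heq] at h; exact lt_irrefl _ h
        · intro heq
          have : r.2 = r.1 := heq
          rw [this] at hr; exact lt_irrefl _ hr
      · intro h
        have hne : e q.1 ≠ e q.2 := fun hc => h (e.injective hc)
        rcases lt_or_gt_of_ne hne with hlt | hgt
        · exact Or.inl hlt
        · exact Or.inr ⟨q.swap, hgt, by ext <;> rfl⟩
    rw [hset] at hbase
    apply Good_congr _ hbase
    intro S hS
    congr 1
    have h1 : S.filter (fun q => q.1 ≠ q.2) = S := by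
      apply Finset.filter_true_of_mem
      intro q hq
      have := hS hq
      rw [actCd, Finset.mem_filter] at this
      rcases this.2 with h | h
      · exact h.1
      · exact absurd h.2 (Finset.notMem_empty _)
    have h2 : (Finset.univ.filter
        (fun q : Λ × Λ => q.1 ≠ q.2 ∧ q.2 ∈ (∅ : Finset Λ) ∧ (q.2, q.2) ∈ S)) = ∅ := by
      apply Finset.filter_false_of_mem
      intro q _
      rintro ⟨_, h, _⟩
      exact Finset.notMem_empty _ h
    rw [unf, h1, h2, Finset.union_empty]
  | @insert s C hs ih =>
    have hGsub : grp s ⊆ actCd C := by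
      intro q hq
      rw [grp, Finset.mem_filter] at hq
      rw [actCd, Finset.mem_filter]
      refine ⟨Finset.mem_univ _, Or.inl ⟨?_, ?_⟩⟩
      · rw [hq.2.1]; exact hq.2.2
      · rw [hq.2.1]; exact hs
    have hgnot : (s, s) ∉ actCd C := by
      rw [actCd, Finset.mem_filter]
      rintro ⟨-, h | h⟩
      · exact h.1 rfl
      · exact hs h.2
    have hcon := contract_good ih hGsub hgnot
    have hset : (actCd C \ grp s) ∪ {(s, s)} = actCd (insert s C) := by
      ext ⟨x, y⟩
      simp only [actCd, grp, Finset.mem_union, Finset.mem_sdiff, Finset.mem_filter,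
        Finset.mem_univ, true_and, Finset.mem_singleton, Finset.mem_insert, Prod.mk.injEq]
      constructor
      · rintro (⟨h1 | h1, h2⟩ | ⟨rfl, rfl⟩)
        · refine Or.inl ⟨h1.1, fun h3 => ?_⟩
          rcases h3 with rfl | h3
          · exact h2 ⟨rfl, h1.1⟩
          · exact h1.2 h3
        · exact Or.inr ⟨h1.1, Or.inr h1.2⟩
        · exact Or.inr ⟨rfl, Or.inl rfl⟩
      · rintro (⟨h1, h2⟩ | ⟨h1, h2⟩)
        · have hys : y ≠ s := fun h => h2 (Or.inl h)
          have hyC : y ∉ C := fun h => h2 (Or.inr h)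
          exact Or.inl ⟨Or.inl ⟨h1, hyC⟩, fun h3 => hys h3.1⟩
        · rcases h2 with h2 | h2
          · exact Or.inr ⟨h2, h1.symm.trans h2⟩
          · exact Or.inl ⟨Or.inr ⟨h1, h2⟩, fun h3 => h3.2 (h1.trans h3.1)⟩
    rw [hset] at hcon
    apply Good_congr _ hcon
    intro S hS
    by_cases hgS : (s, s) ∈ S
    · simp only [if_pos hgS]
      congr 1
      ext ⟨x, y⟩
      simp only [unf, grp, Finset.mem_union, Finset.mem_filter, Finset.mem_erase,
        Finset.mem_univ, true_and, Finset.mem_insert, Prod.mk.injEq, not_and]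
      constructor
      · rintro (⟨(⟨hne, hin⟩ | ⟨rfl, hxs⟩), hxy⟩ | ⟨hxy, hyC, hyy⟩)
        · exact Or.inl ⟨hin, hxy⟩
        · exact Or.inr ⟨hxy, Or.inl rfl, hgS⟩
        · rcases hyy with (⟨hyne, hyyS⟩ | ⟨hys, hyne⟩)
          · exact Or.inr ⟨hxy, Or.inr hyC, hyyS⟩
          · exact absurd hys hyne
      · rintro (⟨hin, hxy⟩ | ⟨hxy, hys | hyC, hyy⟩)
        · refine Or.inl ⟨Or.inl ⟨fun h => ?_, hin⟩, hxy⟩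
          have h1 := (Prod.mk.injEq x y s s).mp h
          exact hxy (h1.1.trans h1.2.symm)
        · subst hys
          exact Or.inl ⟨Or.inr ⟨rfl, hxy⟩, hxy⟩
        · have hys : y ≠ s := fun h => hs (h ▸ hyC)
          refine Or.inr ⟨hxy, hyC, Or.inl ⟨fun h => ?_, hyy⟩⟩
          exact hys ((Prod.mk.injEq y y s s).mp h).1
    · simp only [if_neg hgS]
      congr 1
      ext ⟨x, y⟩
      simp only [unf, Finset.mem_union, Finset.mem_filter, Finset.mem_univ, true_and,
        Finset.mem_insert]
      constructor
      · rintro (h | ⟨hxy, hyC, hyy⟩)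
        · exact Or.inl h
        · exact Or.inr ⟨hxy, Or.inr hyC, hyy⟩
      · rintro (h | ⟨hxy, hys | hyC, hyy⟩)
        · exact Or.inl h
        · exact absurd (hys ▸ hyy) hgS
        · exact Or.inr ⟨hxy, hyC, hyy⟩

end Assembly

/-- Ruelle's zero-free lemma (Proposition 5.1.1 of Ruelle's book): if
`A : Λ×Λ → ℝ` is symmetric with `|A(x,y)| ≤ 1` and `|z_y| > 1` for all `y`,
then `Σ_{σ ⊆ Λ} Π_{y∈σ} (z_y Π_{x∈Λ∖σ} A(x,y)) ≠ 0`. -/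
theorem ruelle_zero_free
    {Λ : Type*} [Fintype Λ] [DecidableEq Λ]
    (A : Λ → Λ → ℝ) (hsym : ∀ x y, A x y = A y x) (hA : ∀ x y, |A x y| ≤ 1)
    (z : Λ → ℂ) (hz : ∀ y, 1 < ‖z y‖) :
    ∑ σ : Finset Λ, ∏ y ∈ σ, (z y * ∏ x ∈ σᶜ, (A x y : ℂ)) ≠ 0 := by
  classical
  set e := Fintype.equivFin Λ with he
  have hGood := contract_all A hA e Finset.univ ∅ (Finset.empty_subset _)
    (fun q => z q.1) (fun i _ => hz i.1)
  rw [Finset.sdiff_empty, aev] at hGood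
  have hkey : ∑ σ : Finset Λ, ∏ y ∈ σ, (z y * ∏ x ∈ σᶜ, (A x y : ℂ))
      = ∑ S ∈ (actCd (Finset.univ : Finset Λ)).powerset,
        FP A (Pfull e) (unf Finset.univ (S ∪ ∅)) * ∏ q ∈ S, z q.1 := by
    refine Finset.sum_nbij' (i := fun σ : Finset Λ => σ.image (fun y => (y, y)))
      (j := fun S : Finset (Λ × Λ) => S.image Prod.fst) ?_ ?_ ?_ ?_ ?_
    · intro σ _
      rw [Finset.mem_powerset]
      intro q hq
      obtain ⟨y, _, rfl⟩ := Finset.mem_image.mp hq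
      rw [actCd, Finset.mem_filter]
      exact ⟨Finset.mem_univ _, Or.inr ⟨rfl, Finset.mem_univ _⟩⟩
    · intro S _
      exact Finset.mem_univ _
    · intro σ _
      beta_reduce
      rw [Finset.image_image]
      ext y
      simp
    · intro S hS
      rw [Finset.mem_powerset] at hS
      beta_reduce
      rw [Finset.image_image]
      ext q
      simp only [Finset.mem_image, Function.comp_apply]
      constructor
      · rintro ⟨p, hp, rfl⟩
        have hmem := hS hp
        rw [actCd, Finset.mem_filter] at hmem
        have hd : p.1 = p.2 := by
          rcases hmem.2 with h | h
          · exact (h.2 (Finset.mem_univ _)).elim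
          · exact h.1
        have hpp : ((p.1, p.1) : Λ × Λ) = p := Prod.ext_iff.mpr ⟨rfl, hd⟩
        exact hpp ▸ hp
      · intro hq
        have hmem := hS hq
        rw [actCd, Finset.mem_filter] at hmem
        have hd : q.1 = q.2 := by
          rcases hmem.2 with h | h
          · exact (h.2 (Finset.mem_univ _)).elim
          · exact h.1
        exact ⟨q, hq, Prod.ext_iff.mpr ⟨rfl, hd⟩⟩
    · intro σ _
      have hinj : Set.InjOn (fun y : Λ => ((y, y) : Λ × Λ)) σ := by
        intro a _ b _ h
        exact congrArg Prod.fst h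
      have hzprod : (∏ q ∈ σ.image (fun y => (y, y)), z q.1) = ∏ y ∈ σ, z y :=
        Finset.prod_image (fun a ha b hb h => hinj ha hb h)
      have hU : unf Finset.univ (σ.image (fun y => (y, y)) ∪ ∅)
          = Finset.univ.filter (fun q : Λ × Λ => q.1 ≠ q.2 ∧ q.2 ∈ σ) := by
        rw [Finset.union_empty, unf]
        ext ⟨x, y⟩
        constructor
        · intro hmem
          rcases Finset.mem_union.mp hmem with h | h
          · rw [Finset.mem_filter] at h
            obtain ⟨h1, hxy⟩ := h
            obtain ⟨t, ht, hteq⟩ := Finset.mem_image.mp h1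
            obtain ⟨he1, he2⟩ := (Prod.mk.injEq t t x y).mp hteq
            exact absurd (he1.symm.trans he2) hxy
          · rw [Finset.mem_filter] at h
            obtain ⟨-, hxy, -, hyy⟩ := h
            obtain ⟨t, ht, hteq⟩ := Finset.mem_image.mp hyy
            have hty := ((Prod.mk.injEq t t y y).mp hteq).1
            rw [Finset.mem_filter]
            exact ⟨Finset.mem_univ _, hxy, hty ▸ ht⟩
        · intro hmem
          rw [Finset.mem_filter] at hmem
          obtain ⟨-, hxy, hy⟩ := hmem
          apply Finset.mem_union_right
          rw [Finset.mem_filter]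
          exact ⟨Finset.mem_univ _, hxy, Finset.mem_univ _, Finset.mem_image.mpr ⟨y, hy, rfl⟩⟩
      rw [hzprod, hU, Finset.prod_mul_distrib]
      rw [mul_comm]
      congr 1
      -- the coefficient computation
      set U : Finset (Λ × Λ) := Finset.univ.filter (fun q : Λ × Λ => q.1 ≠ q.2 ∧ q.2 ∈ σ)
        with hUdef
      have hmemU : ∀ q : Λ × Λ, q ∈ U ↔ (q.1 ≠ q.2 ∧ q.2 ∈ σ) := by
        intro q
        rw [hUdef, Finset.mem_filter]
        simp
      set cut : Λ × Λ → Prop := fun q => (q.1 ∈ σ ∧ q.2 ∉ σ) ∨ (q.1 ∉ σ ∧ q.2 ∈ σ)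
        with hcut
      rw [FP, ← Finset.prod_filter_mul_prod_filter_not (Pfull e) cut]
      have hPfull : ∀ q : Λ × Λ, q ∈ Pfull e → q.1 ≠ q.2 := by
        intro q hq heq
        rw [Pfull, Finset.mem_filter] at hq
        rw [heq] at hq
        exact lt_irrefl _ hq.2
      have hone : (∏ q ∈ (Pfull e).filter (fun q => ¬ cut q), phi A q U) = 1 := by
        apply Finset.prod_eq_one
        intro q hq
        rw [Finset.mem_filter] at hq
        have hqd := hPfull q hq.1
        rw [hcut] at hq
        rw [phi]
        by_cases h2 : q.2 ∈ σ
        · have h1 : q.1 ∈ σ := by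
            by_contra h1
            exact hq.2 (Or.inr ⟨h1, h2⟩)
          rw [if_pos ((hmemU q).mpr ⟨hqd, h2⟩),
            if_pos ((hmemU q.swap).mpr ⟨Ne.symm hqd, h1⟩)]
        · have h1 : q.1 ∉ σ := by
            by_contra h1
            exact hq.2 (Or.inl ⟨h1, h2⟩)
          rw [if_neg (fun h => h2 ((hmemU q).mp h).2),
            if_neg (fun h => h1 ((hmemU q.swap).mp h).2)]
      rw [hone, mul_one]
      have hprod : (∏ y ∈ σ, ∏ x ∈ σᶜ, (A x y : ℂ)) = ∏ p ∈ σ ×ˢ σᶜ, (A p.2 p.1 : ℂ) :=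
        (Finset.prod_product' σ σᶜ (fun y x => (A x y : ℂ))).symm
      rw [hprod]
      refine (Finset.prod_nbij' (i := fun q : Λ × Λ => if q.2 ∈ σ then q.swap else q)
        (j := fun p : Λ × Λ => if e p.1 < e p.2 then p else p.swap) ?_ ?_ ?_ ?_ ?_).symm
      · intro q hq
        rw [Finset.mem_filter] at hq
        have hqd := hPfull q hq.1
        beta_reduce
        rw [Finset.mem_product]
        rcases hq.2 with ⟨h1, h2⟩ | ⟨h1, h2⟩
        · rw [if_neg h2]
          exact ⟨h1, Finset.mem_compl.mpr h2⟩
        · rw [if_pos h2]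
          exact ⟨h2, Finset.mem_compl.mpr h1⟩
      · intro p hp
        rw [Finset.mem_product] at hp
        have h1 : p.1 ∈ σ := hp.1
        have h2 : p.2 ∉ σ := Finset.mem_compl.mp hp.2
        have hne : p.1 ≠ p.2 := fun h => h2 (h ▸ h1)
        have hene : e p.1 ≠ e p.2 := fun h => hne (e.injective h)
        beta_reduce
        rw [Finset.mem_filter]
        by_cases hlt : e p.1 < e p.2
        · rw [if_pos hlt]
          refine ⟨?_, Or.inl ⟨h1, h2⟩⟩
          rw [Pfull, Finset.mem_filter]
          exact ⟨Finset.mem_univ _, hlt⟩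
        · rw [if_neg hlt]
          refine ⟨?_, Or.inr ⟨h2, h1⟩⟩
          rw [Pfull, Finset.mem_filter]
          exact ⟨Finset.mem_univ _, lt_of_le_of_ne (not_lt.mp hlt) (Ne.symm hene)⟩
      · intro q hq
        rw [Finset.mem_filter, Pfull, Finset.mem_filter] at hq
        beta_reduce
        by_cases h2 : q.2 ∈ σ
        · rw [if_pos h2]
          have hnlt : ¬ (e (q.swap).1 < e (q.swap).2) := by
            rw [Prod.fst_swap, Prod.snd_swap]
            exact not_lt.mpr (le_of_lt hq.1.2)
          rw [if_neg hnlt]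
          exact Prod.swap_swap q
        · rw [if_neg h2, if_pos hq.1.2]
      · intro p hp
        rw [Finset.mem_product] at hp
        have h1 : p.1 ∈ σ := hp.1
        have h2 : p.2 ∉ σ := Finset.mem_compl.mp hp.2
        beta_reduce
        by_cases hlt : e p.1 < e p.2
        · rw [if_pos hlt, if_neg h2]
        · rw [if_neg hlt]
          have hsw : (p.swap).2 ∈ σ := h1
          rw [if_pos hsw]
          exact Prod.swap_swap p
      · intro q hq
        rw [Finset.mem_filter] at hq
        have hqd := hPfull q hq.1
        beta_reduce
        rcases hq.2 with ⟨h1, h2⟩ | ⟨h1, h2⟩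
        · rw [if_neg h2, phi,
            if_neg (fun h => h2 ((hmemU q).mp h).2),
            if_pos ((hmemU q.swap).mpr ⟨Ne.symm hqd, h1⟩)]
          rw [hsym q.1 q.2]
        · rw [if_pos h2, phi,
            if_pos ((hmemU q).mpr ⟨hqd, h2⟩)]
          rw [if_neg (fun h => h1 ((hmemU q.swap).mp h).2)]
          rfl
  rw [hkey]
  exact hGood
end

section
/- Let g : ℝᵈ → [0,∞) be even and suppose there is b ≥ 1 such that Π_{i=1}^{n} g(x₀ − x_i) ≤ b whenever Π_{0≤i<j≤n} g(x_i − x_j) > 0. Then for all n ≥ 1 and all x₁,…,x_n ∈ ℝᵈ, Π_{1≤i<j≤n} g(x_i − x_j) ≤ b^{n/2}. -/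
/-- Remark 3.3(a): if `g ≥ 0` is even and `b ≥ 1` is a stability constant,
i.e. `Π_{i=1}^n g(x₀ - x_i) ≤ b` whenever the product over all pairs among
`x₀,…,x_n` is positive, then `Π_{1≤i<j≤n} g(x_i - x_j) ≤ b^{n/2}`. -/
theorem stability_pair_product_bound
    {d : ℕ} (g : (Fin d → ℝ) → ℝ)
    (hg0 : ∀ x, 0 ≤ g x) (heven : ∀ x, g (-x) = g x)
    (b : ℝ) (hb : 1 ≤ b)
    (hstab : ∀ (n : ℕ) (x₀ : Fin d → ℝ) (x : Fin n → Fin d → ℝ),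
      0 < (∏ i, g (x₀ - x i)) * ∏ i, ∏ j ∈ Finset.Ioi i, g (x i - x j) →
      ∏ i, g (x₀ - x i) ≤ b) :
    ∀ (n : ℕ), 1 ≤ n → ∀ x : Fin n → Fin d → ℝ,
      ∏ i, ∏ j ∈ Finset.Ioi i, g (x i - x j) ≤ b ^ ((n : ℝ) / 2) := by
  intro n hn x
  have hb0 : (0:ℝ) ≤ b := le_trans zero_le_one hb
  set P := ∏ i, ∏ j ∈ Finset.Ioi i, g (x i - x j) with hPdef
  have hP0 : 0 ≤ P :=
    Finset.prod_nonneg fun i _ => Finset.prod_nonneg fun j _ => hg0 _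
  rcases eq_or_lt_of_le hP0 with h0 | hPpos
  · rw [← h0]; exact Real.rpow_nonneg hb0 _
  obtain ⟨m, rfl⟩ : ∃ m, n = m + 1 := ⟨n - 1, by omega⟩
  have hgsymm : ∀ u v : Fin d → ℝ, g (u - v) = g (v - u) := by
    intro u v; rw [← heven (v - u), neg_sub]
  -- every pair factor is positive
  have hposlt : ∀ i j : Fin (m+1), i < j → 0 < g (x i - x j) := by
    intro i j hij
    rcases (hg0 (x i - x j)).eq_or_lt with h0 | h0
    · exfalso
      have : P = 0 := Finset.prod_eq_zero (Finset.mem_univ i)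
        (Finset.prod_eq_zero (Finset.mem_Ioi.mpr hij) h0.symm)
      exact hPpos.ne' this
    · exact h0
  have hpos : ∀ i j : Fin (m+1), i ≠ j → 0 < g (x i - x j) := by
    intro i j hij
    rcases lt_or_gt_of_ne hij with h | h
    · exact hposlt i j h
    · rw [hgsymm]; exact hposlt j i h
  -- bound for each "center" k
  have hQ : ∀ k : Fin (m+1), ∏ j ∈ ({k}ᶜ : Finset (Fin (m+1))), g (x k - x j) ≤ b := by
    intro k
    have key : ∏ j ∈ ({k}ᶜ : Finset (Fin (m+1))), g (x k - x j)
        = ∏ i : Fin m, g (x k - x (k.succAbove i)) := by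
      set F : Fin (m+1) → ℝ := fun j => if j = k then 1 else g (x k - x j) with hF
      have h1 : ∏ j ∈ ({k}ᶜ : Finset (Fin (m+1))), g (x k - x j)
          = ∏ j ∈ ({k}ᶜ : Finset (Fin (m+1))), F j := by
        refine Finset.prod_congr rfl fun j hj => ?_
        rw [Finset.mem_compl, Finset.mem_singleton] at hj
        simp [hF, hj]
      have h2 : ∏ j ∈ ({k}ᶜ : Finset (Fin (m+1))), F j = ∏ j, F j := by
        rw [Finset.compl_singleton]
        exact Finset.prod_erase _ (by simp [hF])
      have h3 : ∏ j, F j = F k * ∏ i : Fin m, F (k.succAbove i) :=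
        Fin.prod_univ_succAbove F k
      rw [h1, h2, h3]
      have : ∀ i : Fin m, F (k.succAbove i) = g (x k - x (k.succAbove i)) := by
        intro i; simp [hF, Fin.succAbove_ne k i]
      have hFk : F k = 1 := if_pos rfl
      rw [hFk, one_mul]
      exact Finset.prod_congr rfl fun i _ => this i
    rw [key]
    refine hstab m (x k) (fun i => x (k.succAbove i)) ?_
    refine mul_pos (Finset.prod_pos fun i _ => hpos _ _ (Fin.succAbove_ne k i).symm) ?_
    refine Finset.prod_pos fun i _ => Finset.prod_pos fun j hj => ?_
    refine hpos _ _ fun hc => ?_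
    have := Fin.succAbove_right_injective (p := k) hc
    exact (Finset.mem_Ioi.mp hj).ne this
  -- the product of all the center-products equals P^2
  have hsq : ∏ k, ∏ j ∈ ({k}ᶜ : Finset (Fin (m+1))), g (x k - x j) = P ^ 2 := by
    have := Finset.prod_prod_Ioi_mul_eq_prod_prod_off_diag
      (f := fun j i : Fin (m+1) => g (x i - x j))
    beta_reduce at this
    have h2 : ∏ i : Fin (m+1), ∏ j ∈ Finset.Ioi i, g (x i - x j) * g (x j - x i)
        = P ^ 2 := by
      rw [hPdef, ← Finset.prod_pow]
      refine Finset.prod_congr rfl fun i _ => ?_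
      rw [← Finset.prod_pow]
      refine Finset.prod_congr rfl fun j _ => ?_
      rw [sq, hgsymm (x j) (x i)]
    convert this.symm.trans h2 using 3 with k _ j
  have hPn : P ^ 2 ≤ b ^ (m + 1) := by
    rw [← hsq]
    calc ∏ k, ∏ j ∈ ({k}ᶜ : Finset (Fin (m+1))), g (x k - x j)
        ≤ ∏ _k : Fin (m+1), b :=
          Finset.prod_le_prod
            (fun k _ => Finset.prod_nonneg fun j _ => hg0 _)
            (fun k _ => hQ k)
      _ = b ^ (m + 1) := by simp
  calc P = Real.sqrt (P ^ 2) := (Real.sqrt_sq hP0).symm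
    _ ≤ Real.sqrt (b ^ (m + 1)) := Real.sqrt_le_sqrt hPn
    _ = b ^ (((m + 1 : ℕ) : ℝ) / 2) := by
        rw [Real.sqrt_eq_rpow, ← Real.rpow_natCast b (m + 1),
          ← Real.rpow_mul hb0, mul_one_div]
end

section
/- Let g : ℝᵈ → [0,∞) satisfy: (I) g(r) = 0 whenever |r| ≤ D for some D > 0, and (II) g(r) − 1 ≤ ψ(|r|) for a nonnegative decreasing function ψ on [D,∞) with Σ_{k≥1} kᵈ⁻¹ψ(kD) < ∞ (equivalently ∫₀^∞ t^{d−1}ψ(t)dt < ∞). Then there is a finite constant b ≥ 1 such that for all n and all points x₀,…,x_n with Π_{i<j} g(x_i − x_j) > 0, one has Π_{i=1}^n g(x₀ − x_i) ≤ b. -/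
/-!
Positivity of the all-pairs product forces the points `x₀, …, x_n` to be `D`-separated, so the
balls of radius `D/2` about them are disjoint. Comparing volumes, the shell
`{k D ≤ |x₀ - y| < (k + 1) D}` holds at most `C k^(d-1)` of the `x_i`. Since `ψ` is decreasing,
`log ∏ g(x₀ - x_i) ≤ ∑ ψ(|x₀ - x_i|) ≤ C ∑_k k^(d-1) ψ(k D)`, which is finite.
-/

open Module Metric MeasureTheory Finset

theorem lt_norm_sub_of_prod_ne_zero {E ι : Type*} [NormedAddCommGroup E] [Fintype ι] [LinearOrder ι]
    [LocallyFiniteOrderTop ι] {g : E → ℝ} {D : ℝ} (hcore : ∀ r, ‖r‖ ≤ D → g r = 0) {x₀ : E}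
    {x : ι → E} (hprod : (∏ i, g (x₀ - x i)) * ∏ i, ∏ j ∈ Ioi i, g (x i - x j) ≠ 0) :
    (∀ i, D < ‖x₀ - x i‖) ∧ Pairwise fun i j => D < ‖x i - x j‖ := by
  have hlt_of_ne_zero {r} (hr : g r ≠ 0) : D < ‖r‖ := lt_of_not_ge fun h => hr (hcore r h)
  obtain ⟨hx₀, hxx⟩ := mul_ne_zero_iff.1 hprod
  have hsep_lt {i j : ι} (hij : i < j) : D < ‖x i - x j‖ :=
    hlt_of_ne_zero (prod_ne_zero_iff.1 (prod_ne_zero_iff.1 hxx i (mem_univ i)) j (mem_Ioi.2 hij))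
  refine ⟨fun i => hlt_of_ne_zero (prod_ne_zero_iff.1 hx₀ i (mem_univ i)), fun i j hij => ?_⟩
  rcases hij.lt_or_gt with h | h
  · exact hsep_lt h
  · rw [norm_sub_rev]; exact hsep_lt h

section SeparatedSets

variable {E : Type*} [NormedAddCommGroup E] [NormedSpace ℝ E] [FiniteDimensional ℝ E]

theorem card_mul_pow_add_pow_le_of_separated_in_annulus {D ρ R : ℝ} (hD : 0 < D)
    (hρ : D / 2 < ρ) (hρR : ρ ≤ R) {x₀ : E} {s : Finset E}
    (hsep : (s : Set E).Pairwise fun y z => D ≤ dist y z)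
    (hs : ∀ y ∈ s, ρ ≤ dist y x₀ ∧ dist y x₀ < R) :
    #s * (D / 2) ^ finrank ℝ E + (ρ - D / 2) ^ finrank ℝ E ≤ (R + D / 2) ^ finrank ℝ E := by
  have hR : 0 < R + D / 2 := by linarith
  borelize E
  let μ : Measure E := Measure.addHaar
  set A := ⋃ y ∈ s, ball y (D / 2)
  have hdisj : (s : Set E).PairwiseDisjoint fun y => ball y (D / 2) :=
    fun y hy z hz hyz => ball_disjoint_ball (by linarith [hsep hy hz hyz])
  have hA_inner : Disjoint A (ball x₀ (ρ - D / 2)) :=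
    Set.disjoint_iUnion₂_left.2 fun y hy => ball_disjoint_ball (by linarith [(hs y hy).1])
  have hA_outer : A ⊆ ball x₀ (R + D / 2) :=
    Set.iUnion₂_subset fun y hy => ball_subset_ball' (by linarith [(hs y hy).2])
  have hvol : μ A + μ (ball x₀ (ρ - D / 2)) ≤ μ (ball x₀ (R + D / 2)) := by
    rw [← measure_union hA_inner measurableSet_ball]
    exact measure_mono (Set.union_subset hA_outer (ball_subset_ball (by linarith)))
  rw [measure_biUnion_finset hdisj fun _ _ => measurableSet_ball] at hvol
  simp only [μ.addHaar_ball_of_pos _ (half_pos hD), μ.addHaar_ball_of_pos _ (sub_pos.2 hρ),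
    μ.addHaar_ball_of_pos _ hR, sum_const, nsmul_eq_mul, ← mul_assoc,
    ← add_mul] at hvol
  have := (ENNReal.mul_le_mul_iff_left (measure_ball_pos μ 0 one_pos).ne'
    measure_ball_lt_top.ne).1 hvol
  rwa [← ENNReal.ofReal_natCast, ← ENNReal.ofReal_mul (by positivity),
    ← ENNReal.ofReal_add (by positivity) (pow_nonneg (sub_pos.2 hρ).le _),
    ENNReal.ofReal_le_ofReal_iff (pow_nonneg hR.le _)] at this

theorem card_le_of_separated_in_shell {D : ℝ} (hD : 0 < D) {k : ℕ} (hk : 1 ≤ k) {x₀ : E}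
    {s : Finset E} (hsep : (s : Set E).Pairwise fun y z => D ≤ dist y z)
    (hs : ∀ y ∈ s, k * D ≤ dist y x₀ ∧ dist y x₀ < (k + 1) * D) :
    (#s : ℝ) ≤ 4 * finrank ℝ E * 5 ^ (finrank ℝ E - 1) * k ^ (finrank ℝ E - 1) := by
  set d := finrank ℝ E
  have hk' : (1 : ℝ) ≤ k := by exact_mod_cast hk
  have hpack := card_mul_pow_add_pow_le_of_separated_in_annulus hD (by nlinarith)
    (by nlinarith) hsep hs
  -- in units of `D / 2` the shell lies between the radii `2 k - 1` and `2 k + 3`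
  rw [show (k + 1) * D + D / 2 = (2 * k + 3 : ℝ) * (D / 2) by ring,
    show k * D - D / 2 = (2 * k - 1 : ℝ) * (D / 2) by ring, mul_pow, mul_pow, ← add_mul,
    mul_le_mul_iff_left₀ (pow_pos (half_pos hD) d)] at hpack
  calc (#s : ℝ) ≤ (2 * k + 3) ^ d - (2 * k - 1) ^ d := by linarith
    _ ≤ |(2 * k + 3 : ℝ) - (2 * k - 1)| * d * max |(2 * k + 3 : ℝ)| |2 * k - 1| ^ (d - 1) :=
      (le_abs_self _).trans (abs_pow_sub_pow_le _ _ _)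
    _ = 4 * d * (2 * k + 3) ^ (d - 1) := by
      rw [abs_of_pos (by linarith), abs_of_pos (by linarith), abs_of_pos (by linarith),
        max_eq_left (by linarith)]
      ring
    _ ≤ 4 * d * (5 * k) ^ (d - 1) := by gcongr; linarith
    _ = 4 * d * 5 ^ (d - 1) * k ^ (d - 1) := by ring

theorem sum_le_mul_tsum_of_separated {ι : Type*} [Fintype ι] {D : ℝ} (hD : 0 < D)
    {ψ : ℝ → ℝ} (hψ0 : ∀ t, 0 ≤ ψ t) (hψ : AntitoneOn ψ (Set.Ici D))
    (hsum : Summable fun k : ℕ => (k : ℝ) ^ (finrank ℝ E - 1) * ψ (k * D))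
    {x₀ : E} {x : ι → E} (hsep : Pairwise fun i j => D ≤ ‖x i - x j‖)
    (hx₀ : ∀ i, D ≤ ‖x₀ - x i‖) :
    ∑ i, ψ ‖x₀ - x i‖ ≤ 4 * finrank ℝ E * 5 ^ (finrank ℝ E - 1) *
      ∑' k : ℕ, (k : ℝ) ^ (finrank ℝ E - 1) * ψ (k * D) := by
  classical
  set d := finrank ℝ E
  set C : ℝ := 4 * d * 5 ^ (d - 1)
  simp only [← dist_eq_norm, dist_comm x₀] at hsep hx₀ ⊢
  let κ : ι → ℕ := fun i => ⌊dist (x i) x₀ / D⌋₊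
  have hκ_le (i : ι) : κ i * D ≤ dist (x i) x₀ :=
    (le_div_iff₀ hD).1 (Nat.floor_le (by positivity))
  have hκ_lt (i : ι) : dist (x i) x₀ < (κ i + 1) * D :=
    (div_lt_iff₀ hD).1 (Nat.lt_floor_add_one _)
  have hκ_pos (i : ι) : 1 ≤ κ i :=
    Nat.le_floor ((le_div_iff₀ hD).2 (by simpa using hx₀ i))
  have hx_inj : Function.Injective x := fun i j hxij => by
    by_contra hij
    linarith [hsep hij, dist_eq_zero.2 hxij]
  have hfiber : ∀ k ∈ univ.image κ, (#{i | κ i = k} : ℝ) ≤ C * k ^ (d - 1) := by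
    intro k hk
    obtain ⟨i, -, rfl⟩ := mem_image.1 hk
    rw [← card_image_of_injective _ hx_inj]
    refine card_le_of_separated_in_shell (x₀ := x₀) hD (hκ_pos i) ?_ ?_
    · rw [coe_image, hx_inj.injOn.pairwise_image]
      exact fun j _ l _ hjl => hsep hjl
    · simp only [mem_image, mem_filter]
      rintro _ ⟨j, ⟨-, hj⟩, rfl⟩
      exact hj ▸ ⟨hκ_le j, hκ_lt j⟩
  calc ∑ i, ψ (dist (x i) x₀) ≤ ∑ i, ψ (κ i * D) :=
        sum_le_sum fun i _ => hψ (le_mul_of_one_le_left hD.le (by exact_mod_cast hκ_pos i))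
          (hx₀ i) (hκ_le i)
    _ = ∑ k ∈ univ.image κ, #{i | κ i = k} • ψ (k * D) := sum_comp (fun k : ℕ => ψ (k * D)) κ
    _ ≤ ∑ k ∈ univ.image κ, C * ((k : ℝ) ^ (d - 1) * ψ (k * D)) := by
        refine sum_le_sum fun k hk => ?_
        rw [nsmul_eq_mul, ← mul_assoc]
        exact mul_le_mul_of_nonneg_right (hfiber k hk) (hψ0 _)
    _ = C * ∑ k ∈ univ.image κ, (k : ℝ) ^ (d - 1) * ψ (k * D) := (mul_sum _ _ _).symm
    _ ≤ C * ∑' k : ℕ, (k : ℝ) ^ (d - 1) * ψ (k * D) := by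
        gcongr
        exact hsum.sum_le_tsum _ fun k _ => mul_nonneg (by positivity) (hψ0 _)

end SeparatedSets

/-- Remark 3.3(c): a hard core of diameter `D` together with an integrable
decreasing upper bound `ψ` on `g - 1` implies stability: there is a finite
`b ≥ 1` bounding `Π_{i=1}^n g(x₀ - x_i)` over all admissible configurations
(those whose all-pairs product is positive). -/
theorem hard_core_lower_regular_implies_stability
    {d : ℕ} (g : EuclideanSpace ℝ (Fin d) → ℝ) (hg0 : ∀ r, 0 ≤ g r)
    (D : ℝ) (hD : 0 < D) (hcore : ∀ r, ‖r‖ ≤ D → g r = 0)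
    (ψ : ℝ → ℝ) (hψ0 : ∀ t, 0 ≤ ψ t) (hψmono : AntitoneOn ψ (Set.Ici D))
    (hψg : ∀ r, D ≤ ‖r‖ → g r - 1 ≤ ψ ‖r‖)
    (hψsum : Summable (fun k : ℕ => ((k : ℝ) + 1) ^ (d - 1) * ψ (((k : ℝ) + 1) * D))) :
    ∃ b : ℝ, 1 ≤ b ∧
      ∀ (n : ℕ) (x₀ : EuclideanSpace ℝ (Fin d)) (x : Fin n → EuclideanSpace ℝ (Fin d)),
        0 < (∏ i, g (x₀ - x i)) * ∏ i, ∏ j ∈ Finset.Ioi i, g (x i - x j) →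
        ∏ i, g (x₀ - x i) ≤ b := by
  have hsum : Summable fun k : ℕ => (k : ℝ) ^ (d - 1) * ψ (k * D) :=
    (summable_nat_add_iff 1).1 (by simpa using hψsum)
  set S := ∑' k : ℕ, (k : ℝ) ^ (d - 1) * ψ (k * D)
  have hS : 0 ≤ 4 * d * 5 ^ (d - 1) * S :=
    mul_nonneg (by positivity) (tsum_nonneg fun k => mul_nonneg (by positivity) (hψ0 _))
  refine ⟨Real.exp (4 * d * 5 ^ (d - 1) * S), Real.one_le_exp hS, fun n x₀ x hpos => ?_⟩
  obtain ⟨hx₀, hsep⟩ := lt_norm_sub_of_prod_ne_zero hcore hpos.ne'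
  have hψsum_le := sum_le_mul_tsum_of_separated hD hψ0 hψmono
    (by rwa [finrank_euclideanSpace_fin]) (fun i j hij => (hsep hij).le) fun i => (hx₀ i).le
  rw [finrank_euclideanSpace_fin] at hψsum_le
  calc ∏ i, g (x₀ - x i) ≤ ∏ i, Real.exp (ψ ‖x₀ - x i‖) := by
        refine prod_le_prod (fun i _ => hg0 _) fun i _ => ?_
        linarith [hψg _ (hx₀ i).le, Real.add_one_le_exp (ψ ‖x₀ - x i‖)]
    _ = Real.exp (∑ i, ψ ‖x₀ - x i‖) := (Real.exp_sum _ _).symm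
    _ ≤ Real.exp (4 * d * 5 ^ (d - 1) * S) := Real.exp_le_exp.2 hψsum_le
end
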